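/- arXiv:1203.3780 — 4 statements merged into one kernel-verified Lean document; each statement's English description precedes it below -/
import Mathlib

section
/- Let (W,S) be a Coxeter system, i = (α_1,…,α_l) a reduced word for w ∈ W with l ≥ 1, y ∈ W with y ≤ w, and D = LP_i(y). Suppose 1 ∈ D. Then: (a) ℓ(s_{α_1} y) = ℓ(y) − 1, i.e., s_{α_1} y < y in the Bruhat order; (b) the word i'' := (α_2,…,α_l) is a reduced word for s_{α_1} w, and s_{α_1} y ≤ s_{α_1} w; (c) LP_{i''}(s_{α_1} y) = { j − 1 : j ∈ D, j ≥ 2 } (as a subset of {1,…,l−1}, where the index k of i'' labels the letter α_{k+1} of i). -/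
open CoxeterSystem

namespace QSC

variable {B W : Type*} [Group W] {M : CoxeterMatrix B} (cs : CoxeterSystem M W)

/-- The product (in increasing order of `k`) of the simple reflections `s_{α_k}` over the
1-based indices `k ∈ D` with `k > j`, where `ω = (α_1, …, α_l)`; i.e. `w(i)^D_{>j}`. -/
def prodGT (ω : List B) (D : Finset ℕ) (j : ℕ) : W :=
  cs.wordProd (((ω.zipIdx.map Prod.swap).filter fun p => decide (p.1 + 1 ∈ D ∧ j < p.1 + 1)).map Prod.snd)

/-- The product (in increasing order of `k`) of the simple reflections `s_{α_k}` over the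
1-based indices `k ∈ D` with `k ≤ j`; i.e. `w(i)^D_{≤j}`. -/
def prodLE (ω : List B) (D : Finset ℕ) (j : ℕ) : W :=
  cs.wordProd (((ω.zipIdx.map Prod.swap).filter fun p => decide (p.1 + 1 ∈ D ∧ p.1 + 1 ≤ j)).map Prod.snd)

/-- `w(i)^D`, the total product of the subword of `ω` indexed by `D`. -/
def subwordProd (ω : List B) (D : Finset ℕ) : W := prodGT cs ω D 0

/-- `ω` is a reduced word for `w`. -/
def IsReducedWordFor (ω : List B) (w : W) : Prop := cs.wordProd ω = w ∧ cs.IsReduced ω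

/-- `D` is a left positive subset of `{1, …, l}` for `ω`:
`ℓ(s_{α_j} ⬝ w(i)^D_{>j}) = ℓ(w(i)^D_{>j}) + 1` for all `j ∈ {1, …, l-1}`.
Here the 1-based index `j` corresponds to the 0-based index `j - 1` into `ω`,
so below the 1-based index is `(j : ℕ) + 1` for `j : Fin ω.length`. -/
def LeftPositive (ω : List B) (D : Finset ℕ) : Prop :=
  ∀ j : Fin ω.length, (j : ℕ) + 1 < ω.length →
    cs.length (cs.simple (ω.get j) * prodGT cs ω D ((j : ℕ) + 1)) =
      cs.length (prodGT cs ω D ((j : ℕ) + 1)) + 1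

/-- `D` is a right positive subset of `{1, …, l}` for `ω`:
`ℓ(w(i)^D_{≤j} ⬝ s_{α_{j+1}}) = ℓ(w(i)^D_{≤j}) + 1` for all `j ∈ {1, …, l-1}`.
Here the letter `α_{j+1}` sits at 0-based index `j` of `ω`. -/
def RightPositive (ω : List B) (D : Finset ℕ) : Prop :=
  ∀ j : Fin ω.length, 0 < (j : ℕ) →
    cs.length (prodLE cs ω D (j : ℕ) * cs.simple (ω.get j)) =
      cs.length (prodLE cs ω D (j : ℕ)) + 1

/-- The strong Bruhat order on `W`, characterized by the subword property:
`y ≤ w` iff some reduced word for `w` has a subword that is a reduced word for `y`. -/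
def BruhatLE (y w : W) : Prop :=
  ∃ ω : List B, IsReducedWordFor cs ω w ∧
    ∃ ω' : List B, ω'.Sublist ω ∧ IsReducedWordFor cs ω' y

-- the shifted index set
def shiftD (D : Finset ℕ) : Finset ℕ := (D.erase 1).image (fun j => j - 1)

lemma mem_shiftD {D : Finset ℕ} (k : ℕ) :
    k + 1 ∈ (D.erase 1).image (fun j => j - 1) ↔ k + 1 + 1 ∈ D := by
  simp only [Finset.mem_image, Finset.mem_erase]
  constructor
  · rintro ⟨m, ⟨hm1, hmD⟩, hm⟩
    have hme : m = k + 1 + 1 := by omega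
    rw [← hme]; exact hmD
  · intro h
    refine ⟨k + 1 + 1, ⟨by omega, h⟩, by omega⟩

/-- The selected subword of `ω` indexed by `D`. -/
def selList (ω : List B) (D : Finset ℕ) : List B :=
  ((ω.zipIdx.map Prod.swap).filter fun p => decide (p.1 + 1 ∈ D ∧ 0 < p.1 + 1)).map Prod.snd

lemma subwordProd_eq (ω : List B) (D : Finset ℕ) :
    subwordProd cs ω D = cs.wordProd (selList ω D) := rfl

lemma selList_sublist (ω : List B) (D : Finset ℕ) : (selList ω D).Sublist ω := by
  have h := (List.filter_sublist (l := ω.zipIdx.map Prod.swap)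
    (p := fun p => decide (p.1 + 1 ∈ D ∧ 0 < p.1 + 1))).map Prod.snd
  rwa [List.map_map, show (Prod.snd ∘ Prod.swap : B × ℕ → B) = Prod.fst from rfl,
    List.zipIdx_map_fst] at h

lemma filterMap_shift (D : Finset ℕ) (c c' : ℕ) (hcc : ∀ k : ℕ, c < k + 1 + 1 ↔ c' < k + 1) :
    ∀ (t : List B) (n : ℕ),
      (((t.zipIdx (n+1)).map Prod.swap).filter fun x => decide (x.1 + 1 ∈ D ∧ c < x.1 + 1)).map Prod.snd =
      (((t.zipIdx n).map Prod.swap).filter fun x =>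
        decide (x.1 + 1 ∈ (D.erase 1).image (fun j => j - 1) ∧ c' < x.1 + 1)).map Prod.snd := by
  intro t
  induction t with
  | nil => intro n; rfl
  | cons a t ih =>
    intro n
    rw [List.zipIdx_cons, List.zipIdx_cons, List.map_cons, List.map_cons, Prod.swap_prod_mk,
      Prod.swap_prod_mk, List.filter_cons, List.filter_cons]
    have hiff : (n + 1 + 1 ∈ D ∧ c < n + 1 + 1) ↔
        (n + 1 ∈ (D.erase 1).image (fun j => j - 1) ∧ c' < n + 1) :=
      and_congr (mem_shiftD n).symm (hcc n)
    by_cases h : n + 1 ∈ (D.erase 1).image (fun j => j - 1) ∧ c' < n + 1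
    · have h2 : n + 1 + 1 ∈ D ∧ c < n + 1 + 1 := hiff.mpr h
      rw [if_pos (decide_eq_true h2), if_pos (decide_eq_true h), List.map_cons, List.map_cons, ih]
    · have h2 : ¬ (n + 1 + 1 ∈ D ∧ c < n + 1 + 1) := fun hh => h (hiff.mp hh)
      rw [if_neg (fun hh => h2 (of_decide_eq_true hh)),
        if_neg (fun hh => h (of_decide_eq_true hh))]
      exact ih (n + 1)

lemma prodGT_cons (a : B) (t : List B) (D : Finset ℕ) (j : ℕ) :
    prodGT cs (a :: t) D (j + 1) = prodGT cs t ((D.erase 1).image fun j => j - 1) j := by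
  unfold prodGT
  rw [List.zipIdx_cons, List.map_cons, Prod.swap_prod_mk, List.filter_cons]
  have h : ¬ ((0 : ℕ) + 1 ∈ D ∧ j + 1 < 0 + 1) := by omega
  rw [if_neg (fun hh => h (of_decide_eq_true hh))]
  congr 1
  exact filterMap_shift D (j+1) j (fun k => by omega) t 0

lemma selList_cons (a : B) (t : List B) (D : Finset ℕ) :
    selList (a :: t) D =
      (if 1 ∈ D then [a] else []) ++ selList t ((D.erase 1).image fun j => j - 1) := by
  unfold selList
  rw [List.zipIdx_cons, List.map_cons, Prod.swap_prod_mk, List.filter_cons]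
  have htl : (((t.zipIdx 1).map Prod.swap).filter fun x =>
        decide (x.1 + 1 ∈ D ∧ 0 < x.1 + 1)).map Prod.snd =
      (((t.zipIdx 0).map Prod.swap).filter fun x =>
        decide (x.1 + 1 ∈ (D.erase 1).image (fun j => j - 1) ∧ 0 < x.1 + 1)).map Prod.snd :=
    filterMap_shift D 0 0 (fun k => by omega) t 0
  by_cases h1 : 1 ∈ D
  · have h : ((0 : ℕ) + 1 ∈ D ∧ 0 < 0 + 1) := ⟨h1, by omega⟩
    rw [if_pos (decide_eq_true h), if_pos h1, List.map_cons, List.singleton_append, htl]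
  · have h : ¬ ((0 : ℕ) + 1 ∈ D ∧ 0 < 0 + 1) := fun hh => h1 hh.1
    rw [if_neg (fun hh => h (of_decide_eq_true hh)), if_neg h1, List.nil_append]
    exact htl

lemma shiftD_subset {t : List B} {a : B} {D : Finset ℕ}
    (hD : D ⊆ Finset.Icc 1 (a :: t).length) :
    (D.erase 1).image (fun j => j - 1) ⊆ Finset.Icc 1 t.length := by
  intro m hm
  simp only [Finset.mem_image, Finset.mem_erase] at hm
  obtain ⟨k, ⟨hk1, hkD⟩, hkm⟩ := hm
  have := hD hkD
  simp only [Finset.mem_Icc, List.length_cons] at this ⊢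
  omega

lemma leftPositive_tail {t : List B} {a : B} {D : Finset ℕ}
    (hlp : LeftPositive cs (a :: t) D) :
    LeftPositive cs t ((D.erase 1).image fun j => j - 1) := by
  intro j hj
  have hj2 : ((j : ℕ) + 1) + 1 < (a :: t).length := by
    simp only [List.length_cons]; omega
  have := hlp ⟨(j : ℕ) + 1, by simp only [List.length_cons]; omega⟩ hj2
  simp only [List.get_cons_succ] at this
  rw [prodGT_cons] at this
  exact this

lemma selList_reduced : ∀ (ω : List B) (D : Finset ℕ),
    D ⊆ Finset.Icc 1 ω.length → LeftPositive cs ω D → cs.IsReduced (selList ω D) := by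
  intro ω
  induction ω with
  | nil =>
    intro D _ _
    show cs.length (cs.wordProd _) = _
    simp [selList, CoxeterSystem.wordProd_nil]
  | cons a t ih =>
    intro D hsub hlp
    have hsub' := shiftD_subset hsub
    have hlp' := leftPositive_tail cs hlp
    have ihred := ih _ hsub' hlp'
    rw [selList_cons]
    by_cases h1 : 1 ∈ D
    · simp only [h1, if_true, List.singleton_append]
      show cs.length (cs.wordProd (a :: _)) = _
      rw [CoxeterSystem.wordProd_cons]
      have hkey : cs.length (cs.simple a *
          cs.wordProd (selList t ((D.erase 1).image fun j => j - 1))) =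
          cs.length (cs.wordProd (selList t ((D.erase 1).image fun j => j - 1))) + 1 := by
        rcases t with _ | ⟨b, t'⟩
        · have hD' : ((D.erase 1).image fun j => j - 1) = ∅ := by
            rw [Finset.eq_empty_iff_forall_notMem]
            intro x hx
            exact absurd (hsub' hx) (by simp)
          simp [selList, hD', CoxeterSystem.wordProd_nil, CoxeterSystem.length_simple]
        · have h0 := hlp ⟨0, by simp⟩ (by simp)
          simp only [List.get_cons_zero] at h0
          rw [show (((⟨0, by simp⟩ : Fin (a :: b :: t').length) : ℕ) + 1) = 0 + 1 from rfl,
            prodGT_cons] at h0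
          rw [← subwordProd_eq]
          exact h0
      rw [hkey, ihred]
      simp
    · simp only [h1, if_false, List.nil_append]
      exact ihred



/-- Let `ω = (α_1, …, α_l)` be a reduced word for `w` with `l ≥ 1`,
`y ≤ w`, and let `D = LP_i(y)` (i.e. `D` is the unique left positive subset for `ω` with
`w(i)^D = y`). Suppose `1 ∈ D`. Then (a) `ℓ(s_{α_1} y) = ℓ(y) - 1`, i.e.
`s_{α_1} y < y` in the Bruhat order; (b) `ω.tail = (α_2, …, α_l)` is a reduced word for
`s_{α_1} w` and `s_{α_1} y ≤ s_{α_1} w`; (c) `LP_{i''}(s_{α_1} y) = {j - 1 : j ∈ D, j ≥ 2}`. -/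
theorem statement3 (w y : W) (ω : List B) (hl : ω ≠ [])
    (hred : IsReducedWordFor cs ω w) (hy : BruhatLE cs y w)
    (D : Finset ℕ) (hD : D ⊆ Finset.Icc 1 ω.length)
    (hlp : LeftPositive cs ω D) (hprod : subwordProd cs ω D = y)
    (h1 : (1 : ℕ) ∈ D) :
    (cs.length (cs.simple (ω.head hl) * y) + 1 = cs.length y ∧
      BruhatLE cs (cs.simple (ω.head hl) * y) y ∧ cs.simple (ω.head hl) * y ≠ y) ∧
    (IsReducedWordFor cs ω.tail (cs.simple (ω.head hl) * w) ∧
      BruhatLE cs (cs.simple (ω.head hl) * y) (cs.simple (ω.head hl) * w)) ∧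
    ((D.erase 1).image (fun j => j - 1) ⊆ Finset.Icc 1 ω.tail.length ∧
      LeftPositive cs ω.tail ((D.erase 1).image fun j => j - 1) ∧
      subwordProd cs ω.tail ((D.erase 1).image fun j => j - 1) =
        cs.simple (ω.head hl) * y) := by
  obtain ⟨a, t, rfl⟩ := List.exists_cons_of_ne_nil hl
  simp only [List.head_cons, List.tail_cons] at *
  set D' : Finset ℕ := (D.erase 1).image (fun j => j - 1) with hD'
  -- basic structural facts
  have hselcons : selList (a :: t) D = a :: selList t D' := by
    rw [selList_cons, if_pos h1, List.singleton_append]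
  have hy' : y = cs.simple a * cs.wordProd (selList t D') := by
    rw [← hprod, subwordProd_eq, hselcons, CoxeterSystem.wordProd_cons]
  have hz : cs.simple a * y = cs.wordProd (selList t D') := by
    rw [hy', CoxeterSystem.simple_mul_simple_cancel_left]
  have hredsub : cs.IsReduced (selList (a :: t) D) := selList_reduced cs _ D hD hlp
  have hsub' : D' ⊆ Finset.Icc 1 t.length := shiftD_subset hD
  have hlp' : LeftPositive cs t D' := leftPositive_tail cs hlp
  have hredsub' : cs.IsReduced (selList t D') := selList_reduced cs t D' hsub' hlp'
  have hlenY : cs.length y = (selList t D').length + 1 := by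
    have := hredsub
    rw [CoxeterSystem.IsReduced, hselcons, List.length_cons,
      CoxeterSystem.wordProd_cons, ← hy'] at this
    exact this
  have hlenZ : cs.length (cs.wordProd (selList t D')) = (selList t D').length := hredsub'
  -- reduced word for s a * y
  have hrwz : IsReducedWordFor cs (selList t D') (cs.simple a * y) := ⟨hz.symm, hredsub'⟩
  -- part (b) pieces
  have hw : cs.wordProd t = cs.simple a * w := by
    rw [← hred.1, CoxeterSystem.wordProd_cons, CoxeterSystem.simple_mul_simple_cancel_left]
  have hlenW : cs.length w = t.length + 1 := by
    have := hred.2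
    rw [CoxeterSystem.IsReduced, List.length_cons, hred.1] at this
    exact this
  have hredt : cs.IsReduced t := by
    rw [CoxeterSystem.IsReduced]
    have h1' : cs.length (cs.wordProd t) ≤ t.length := cs.length_wordProd_le t
    have h3 : cs.length w ≤ 1 + cs.length (cs.wordProd t) := by
      have hww : w = cs.simple a * cs.wordProd t := by
        rw [← hred.1, CoxeterSystem.wordProd_cons]
      calc cs.length w ≤ cs.length (cs.simple a) + cs.length (cs.wordProd t) := by
            rw [hww]; exact cs.length_mul_le _ _
        _ = 1 + cs.length (cs.wordProd t) := by rw [cs.length_simple]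
    omega
  refine ⟨⟨?_, ?_, ?_⟩, ⟨⟨hw, hredt⟩, ?_⟩, hsub', hlp', ?_⟩
  · rw [hz, hlenZ, hlenY]
  · exact ⟨selList (a :: t) D,
      ⟨by rw [← subwordProd_eq]; exact hprod, hredsub⟩,
      selList t D', by rw [hselcons]; exact List.sublist_cons_self _ _, hrwz⟩
  · intro h
    have : cs.length (cs.simple a * y) = cs.length y := by rw [h]
    rw [hz, hlenZ, hlenY] at this
    omega
  · exact ⟨t, ⟨hw, hredt⟩, selList t D', selList_sublist t D', hrwz⟩
  · rw [subwordProd_eq, hz]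



end QSC
end

section
/- Let (W,S) be a Coxeter system, i = (α_1,…,α_l) a reduced word for w ∈ W with l ≥ 1, y ∈ W with y ≤ w, and D = LP_i(y). Suppose l ∉ D. Then, with i' := (α_1,…,α_{l−1}) (which is a reduced word for w·s_{α_l}): D ⊆ {1,…,l−1}, D is a left positive subset for i', y ≤ w·s_{α_l} in the Bruhat order, and LP_{i'}(y) = D. -/
open CoxeterSystem

namespace QSC

variable {B W : Type*} [Group W] {M : CoxeterMatrix B} (cs : CoxeterSystem M W)

/-- The subword of `ω` indexed (1-based) by the elements of `D` that are `> j`. -/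
def Lw (ω : List B) (D : Finset ℕ) (j : ℕ) : List B :=
  ((ω.zipIdx.map Prod.swap).filter fun p => decide (p.1 + 1 ∈ D ∧ j < p.1 + 1)).map Prod.snd

/-- Enumeration starting at `n`, as pairs (index, entry). -/
def enumFrom' {α : Type*} (n : ℕ) (l : List α) : List (ℕ × α) := (l.zipIdx n).map Prod.swap

lemma enumFrom'_cons {α : Type*} (n : ℕ) (a : α) (l : List α) :
    enumFrom' n (a :: l) = (n, a) :: enumFrom' (n + 1) l := rfl

lemma mem_enumFrom' {α : Type*} {n i : ℕ} {x : α} {l : List α} :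
    (i, x) ∈ enumFrom' n l ↔ n ≤ i ∧ l[i - n]? = some x := by
  unfold enumFrom'
  rw [List.mem_map]
  constructor
  · rintro ⟨⟨y, k⟩, h, he⟩
    simp only [Prod.swap_prod_mk, Prod.mk.injEq] at he
    obtain ⟨rfl, rfl⟩ := he
    exact List.mk_mem_zipIdx_iff_le_and_getElem?_sub.mp h
  · intro h
    exact ⟨(x, i), List.mk_mem_zipIdx_iff_le_and_getElem?_sub.mpr h, rfl⟩

lemma enumFrom'_append {α : Type*} (n : ℕ) (a b : List α) :
    enumFrom' n (a ++ b) = enumFrom' n a ++ enumFrom' (n + a.length) b := by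
  simp [enumFrom', List.zipIdx_append]

lemma enumFrom'_map_snd {α : Type*} (n : ℕ) (l : List α) :
    (enumFrom' n l).map Prod.snd = l := by
  rw [enumFrom', List.map_map]
  exact List.zipIdx_map_fst n l

lemma filter_enumFrom_split (D : Finset ℕ) (j : ℕ) :
    ∀ (l : List α) (n : ℕ) (_h1 : n ≤ j) (h2 : j - n < l.length),
    (enumFrom' n l).filter (fun p => decide (p.1 + 1 ∈ D ∧ j < p.1 + 1)) =
      (if j + 1 ∈ D then [(j, l.get ⟨j - n, h2⟩)] else []) ++
      (enumFrom' n l).filter (fun p => decide (p.1 + 1 ∈ D ∧ j + 1 < p.1 + 1)) := by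
  intro l
  induction l with
  | nil => intro n h1 h2; simp at h2
  | cons a l ih =>
    intro n h1 h2
    rw [enumFrom'_cons]
    rcases eq_or_lt_of_le h1 with rfl | hlt
    · have hz : n - n = 0 := by omega
      rw [List.filter_cons, List.filter_cons]
      have e1 : (decide (n + 1 ∈ D ∧ n < n + 1)) = decide (n + 1 ∈ D) := by
        simp
      have e2 : (decide (n + 1 ∈ D ∧ n + 1 < n + 1)) = false := by simp
      rw [e1, e2]
      have e3 : (enumFrom' (n + 1) l).filter (fun p => decide (p.1 + 1 ∈ D ∧ n < p.1 + 1)) =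
          (enumFrom' (n + 1) l).filter (fun p => decide (p.1 + 1 ∈ D ∧ n + 1 < p.1 + 1)) := by
        apply List.filter_congr
        intro x hx
        have hxm := (mem_enumFrom' (n := n+1) (i := x.1)
          (x := x.2) (l := l)).mp hx
        have : n + 1 ≤ x.1 := hxm.1
        simp only [decide_eq_decide]
        constructor <;> rintro ⟨hm, hlt2⟩ <;> exact ⟨hm, by omega⟩
      rw [e3]
      by_cases hD : n + 1 ∈ D <;> simp [hD, hz]
    · have h1' : n + 1 ≤ j := hlt
      have h2' : j - (n + 1) < l.length := by simp at h2; omega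
      have hget : (a :: l).get ⟨j - n, h2⟩ = l.get ⟨j - (n + 1), h2'⟩ := by
        have hjn : j - n = (j - (n + 1)) + 1 := by omega
        simp_rw [List.get_eq_getElem, hjn]
        exact List.getElem_cons_succ ..
      rw [List.filter_cons, List.filter_cons]
      have e1 : (decide (n + 1 ∈ D ∧ j < n + 1)) = false := by
        simp; omega
      have e2 : (decide (n + 1 ∈ D ∧ j + 1 < n + 1)) = false := by
        simp; omega
      rw [e1, e2, hget]
      simpa using ih (n + 1) h1' h2'

lemma Lw_split (ω : List B) (D : Finset ℕ) (j : ℕ) (hj : j < ω.length) :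
    Lw ω D j = (if j + 1 ∈ D then [ω.get ⟨j, hj⟩] else []) ++ Lw ω D (j + 1) := by
  unfold Lw
  rw [show ω.zipIdx.map Prod.swap = enumFrom' 0 ω from rfl,
    filter_enumFrom_split D j ω 0 (Nat.zero_le j) (by simpa using hj)]
  by_cases hD : j + 1 ∈ D <;> simp [hD]

lemma Lw_ge_length (ω : List B) (D : Finset ℕ) (j : ℕ) (hj : ω.length ≤ j) :
    Lw ω D j = [] := by
  unfold Lw
  rw [List.filter_eq_nil_iff.mpr, List.map_nil]
  intro x hx
  have := ((mem_enumFrom' (n := 0) (i := x.1) (x := x.2) (l := ω)).mp hx).2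
  simp only [Nat.sub_zero] at this
  have hx1 : x.1 < ω.length := by
    by_contra h
    rw [List.getElem?_eq_none (by omega)] at this
    simp at this
  simp only [decide_eq_true_eq, not_and]
  omega

lemma Lw_append_single (a : List B) (x : B) (D : Finset ℕ) (h : a.length + 1 ∉ D) (j : ℕ) :
    Lw (a ++ [x]) D j = Lw a D j := by
  unfold Lw
  rw [show (a ++ [x]).zipIdx.map Prod.swap = enumFrom' 0 (a ++ [x]) from rfl,
    show a.zipIdx.map Prod.swap = enumFrom' 0 a from rfl,
    enumFrom'_append, List.filter_append, List.map_append]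
  have : (enumFrom' (0 + a.length) [x]).filter
      (fun p => decide (p.1 + 1 ∈ D ∧ j < p.1 + 1)) = [] := by
    simp only [enumFrom', List.zipIdx_cons, List.zipIdx_nil, List.map_cons, List.map_nil,
      Prod.swap_prod_mk, List.filter_cons, List.filter_nil]
    simp [h]
  rw [this, List.map_nil, List.append_nil]

lemma prodGT_eq_Lw (ω : List B) (D : Finset ℕ) (j : ℕ) :
    prodGT cs ω D j = cs.wordProd (Lw ω D j) := rfl

lemma isReduced_Lw (ω : List B) (D : Finset ℕ) (hD : D ⊆ Finset.Icc 1 ω.length)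
    (hnl : ω.length ∉ D) (hlp : LeftPositive cs ω D) :
    ∀ (m j : ℕ), ω.length ≤ j + m → cs.IsReduced (Lw ω D j) := by
  intro m
  induction m with
  | zero =>
    intro j hj
    rw [Lw_ge_length ω D j (by omega)]
    simp [CoxeterSystem.IsReduced]
  | succ m ih =>
    intro j hj
    by_cases hle : ω.length ≤ j + m
    · exact ih j hle
    have hjlt : j < ω.length := by omega
    rw [Lw_split ω D j hjlt]
    by_cases hD1 : j + 1 ∈ D
    · have hj1 : j + 1 < ω.length := by
        have := Finset.mem_Icc.mp (hD hD1)
        rcases Nat.lt_or_ge (j+1) ω.length with h | h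
        · exact h
        · exfalso; exact hnl (by rwa [show ω.length = j + 1 by omega])
      have hstep := hlp ⟨j, hjlt⟩ (by simpa using hj1)
      have ihred := ih (j + 1) (by omega)
      simp only [hD1, if_pos, List.singleton_append]
      unfold CoxeterSystem.IsReduced at ihred ⊢
      rw [cs.wordProd_cons, List.length_cons]
      rw [prodGT_eq_Lw] at hstep
      rw [hstep, ihred]
    · simp only [hD1, if_neg, not_false_iff, List.nil_append]
      exact ih (j + 1) (by omega)


/-- Let `ω = (α_1, …, α_l)` be a reduced word for `w` with `l ≥ 1`,
`y ≤ w`, and let `D = LP_i(y)`. Suppose `l ∉ D`. Then, with `i' = (α_1, …, α_{l-1})`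
(which is a reduced word for `w ⬝ s_{α_l}`): `D ⊆ {1, …, l-1}`, `D` is left positive for
`i'`, `y ≤ w ⬝ s_{α_l}` in the Bruhat order, and `LP_{i'}(y) = D`. -/
theorem statement5 (w y : W) (ω : List B) (hl : ω ≠ [])
    (hred : IsReducedWordFor cs ω w) (hy : BruhatLE cs y w)
    (D : Finset ℕ) (hD : D ⊆ Finset.Icc 1 ω.length)
    (hlp : LeftPositive cs ω D) (hprod : subwordProd cs ω D = y)
    (hnl : ω.length ∉ D) :
    IsReducedWordFor cs ω.dropLast (w * cs.simple (ω.getLast hl)) ∧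
    D ⊆ Finset.Icc 1 (ω.length - 1) ∧
    LeftPositive cs ω.dropLast D ∧
    BruhatLE cs y (w * cs.simple (ω.getLast hl)) ∧
    subwordProd cs ω.dropLast D = y := by
  have hωeq : ω.dropLast ++ [ω.getLast hl] = ω := List.dropLast_append_getLast hl
  have hlen : ω.dropLast.length + 1 = ω.length := by
    rw [List.length_dropLast]
    have := List.length_pos_iff.mpr hl
    omega
  have hnl' : ω.dropLast.length + 1 ∉ D := by rwa [hlen]
  have hLw : ∀ j, Lw ω.dropLast D j = Lw ω D j := by
    intro j
    conv_rhs => rw [← hωeq]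
    rw [Lw_append_single ω.dropLast (ω.getLast hl) D hnl' j]
  -- the word product of the truncated word
  have hprod' : cs.wordProd ω.dropLast = w * cs.simple (ω.getLast hl) := by
    have : cs.wordProd ω = cs.wordProd ω.dropLast * cs.simple (ω.getLast hl) := by
      conv_lhs => rw [← hωeq]
      rw [cs.wordProd_append, cs.wordProd_singleton]
    rw [hred.1] at this
    rw [this, cs.simple_mul_simple_cancel_right]
  -- part 1 : reduced word
  have h1 : IsReducedWordFor cs ω.dropLast (w * cs.simple (ω.getLast hl)) := by
    refine ⟨hprod', ?_⟩
    unfold CoxeterSystem.IsReduced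
    have hle : cs.length (cs.wordProd ω.dropLast) ≤ ω.dropLast.length :=
      cs.length_wordProd_le ω.dropLast
    have hw : cs.length w = ω.length := by
      have := hred.2; unfold CoxeterSystem.IsReduced at this; rw [hred.1] at this
      exact this
    have hge := cs.length_mul_ge_length_sub_length w (cs.simple (ω.getLast hl))
    rw [cs.length_simple, hw] at hge
    rw [hprod'] at hle
    rw [hprod']
    have hld : ω.dropLast.length = ω.length - 1 := List.length_dropLast
    omega
  -- part 2 : D ⊆ Icc 1 (l - 1)
  have h2 : D ⊆ Finset.Icc 1 (ω.length - 1) := by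
    intro k hk
    have := Finset.mem_Icc.mp (hD hk)
    rw [Finset.mem_Icc]
    have hkne : k ≠ ω.length := fun h => hnl (h ▸ hk)
    omega
  -- part 3 : left positivity for the truncated word
  have h3 : LeftPositive cs ω.dropLast D := by
    intro j hj
    have hjlt : (j : ℕ) < ω.length := by
      have h := j.2
      omega
    have hjget : ω.dropLast.get j = ω.get ⟨(j : ℕ), hjlt⟩ := by
      simp [List.getElem_dropLast]
    rw [prodGT_eq_Lw, hLw, hjget, ← prodGT_eq_Lw]
    exact hlp ⟨(j : ℕ), hjlt⟩ (by simp only [Fin.val_mk]; omega)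
  -- reducedness of the subword
  have hredsub : cs.IsReduced (Lw ω D 0) :=
    isReduced_Lw cs ω D hD hnl hlp ω.length 0 (by omega)
  have hsubprod : cs.wordProd (Lw ω D 0) = y := hprod
  -- part 5 : subword product
  have h5 : subwordProd cs ω.dropLast D = y := by
    unfold subwordProd
    rw [prodGT_eq_Lw, hLw, ← prodGT_eq_Lw]
    exact hprod
  -- part 4 : Bruhat order
  have h4 : BruhatLE cs y (w * cs.simple (ω.getLast hl)) := by
    refine ⟨ω.dropLast, h1, Lw ω.dropLast D 0, ?_, ?_, ?_⟩
    · have hsub : ((ω.dropLast.zipIdx.map Prod.swap).filter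
          (fun p => decide (p.1 + 1 ∈ D ∧ 0 < p.1 + 1))).Sublist
            (ω.dropLast.zipIdx.map Prod.swap) :=
        List.filter_sublist
      have := hsub.map Prod.snd
      rwa [show (ω.dropLast.zipIdx.map Prod.swap).map Prod.snd = ω.dropLast from
        enumFrom'_map_snd 0 ω.dropLast] at this
    · exact h5
    · rw [hLw]; exact hredsub
  exact ⟨h1, h2, h3, h4, h5⟩

end QSC
end

section
/- Let (W,S) be a Coxeter system, i = (α_1,…,α_l) a reduced word for w ∈ W with l ≥ 1, y ∈ W with y ≤ w, and D = LP_i(y). Suppose l ∈ D, and set i' := (α_1,…,α_{l−1}) (a reduced word for w·s_{α_l}) and D' := D \ {l}. Then: (a) for every j ∈ {0,…,l−1}, w(i)^D_{>j} = (w s_{α_l})(i')^{D'}_{>j} · s_{α_l} and ℓ(w(i)^D_{>j}) = ℓ((w s_{α_l})(i')^{D'}_{>j}) + 1; in particular ℓ(y·s_{α_l}) = ℓ(y) − 1; (b) D' is a left positive subset for i'; (c) y·s_{α_l} ≤ w·s_{α_l} in the Bruhat order and LP_{i'}(y·s_{α_l}) = D'. -/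
open CoxeterSystem

namespace QSC

variable {B W : Type*} [Group W] {M : CoxeterMatrix B} (cs : CoxeterSystem M W)

/-- aux -/
def F (n : ℕ) (ω : List B) (D : Finset ℕ) (j : ℕ) : List B :=
  (((ω.zipIdx n).map Prod.swap).filter fun p => decide (p.1 + 1 ∈ D ∧ j < p.1 + 1)).map Prod.snd

lemma prodGT_eq (ω : List B) (D : Finset ℕ) (j : ℕ) :
    prodGT cs ω D j = cs.wordProd (F 0 ω D j) := rfl

variable {D : Finset ℕ}

lemma F_cons (n j : ℕ) (a : B) (ω : List B) :
    F n (a :: ω) D j = (if n + 1 ∈ D ∧ j < n + 1 then [a] else []) ++ F (n+1) ω D j := by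
  simp only [F, List.zipIdx_cons, List.map_cons, Prod.swap_prod_mk, List.filter_cons]
  by_cases h : n + 1 ∈ D ∧ j ≤ n <;> simp [h]

lemma F_append (n j : ℕ) (ω ω' : List B) :
    F n (ω ++ ω') D j = F n ω D j ++ F (n + ω.length) ω' D j := by
  simp [F, List.zipIdx_append, List.filter_append]

lemma F_congr {n j j' : ℕ} (ω : List B) (h : j ≤ n) (h' : j' ≤ n) :
    F n ω D j = F n ω D j' := by
  unfold F
  congr 1
  apply List.filter_congr
  rintro ⟨i, x⟩ hm
  obtain ⟨⟨x', i'⟩, hp, he⟩ := List.mem_map.mp hm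
  simp only [Prod.swap_prod_mk, Prod.mk.injEq] at he
  rw [he.1, he.2] at hp
  have hi := (List.mem_zipIdx hp).1
  apply decide_eq_decide.mpr
  constructor <;> rintro ⟨h1, _⟩ <;> exact ⟨h1, by omega⟩

lemma F_empty {n j : ℕ} (ω : List B) (h : n + ω.length ≤ j) :
    F n ω D j = [] := by
  unfold F
  rw [List.filter_eq_nil_iff.mpr, List.map_nil]
  rintro ⟨i, x⟩ hm
  obtain ⟨⟨x', i'⟩, hp, he⟩ := List.mem_map.mp hm
  simp only [Prod.swap_prod_mk, Prod.mk.injEq] at he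
  rw [he.1, he.2] at hp
  have hi := (List.mem_zipIdx hp).2.1
  simp only [decide_eq_true_eq, not_and]
  omega

lemma F_erase {n m : ℕ} (j : ℕ) (ω : List B) (h : n + ω.length < m) :
    F n ω D j = F n ω (D.erase m) j := by
  unfold F
  congr 1
  apply List.filter_congr
  rintro ⟨i, x⟩ hm
  obtain ⟨⟨x', i'⟩, hp, he⟩ := List.mem_map.mp hm
  simp only [Prod.swap_prod_mk, Prod.mk.injEq] at he
  rw [he.1, he.2] at hp
  have hi := (List.mem_zipIdx hp).2.1
  apply decide_eq_decide.mpr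
  have : i + 1 ≠ m := by omega
  simp only [Finset.mem_erase]
  tauto

lemma F_rec {j : ℕ} (n : ℕ) (ω : List B) (hj : n ≤ j) (hj2 : j < n + ω.length) :
    F n ω D j = (if j + 1 ∈ D then [ω.get ⟨j - n, by omega⟩] else []) ++ F n ω D (j+1) := by
  induction ω generalizing n with
  | nil => simp at hj2; omega
  | cons a ω ih =>
    rw [F_cons, F_cons (j := j + 1)]
    rcases Nat.eq_or_lt_of_le hj with rfl | h
    · have h1 : ¬ (n + 1 ∈ D ∧ n + 1 < n + 1) := by omega
      have h2 : F (n+1) ω D n = F (n+1) ω D (n+1) := F_congr ω (by omega) (by omega)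
      rw [if_neg h1, h2]
      by_cases hD : n + 1 ∈ D
      · simp [hD]
      · simp [hD]
    · have h1 : ¬ (n + 1 ∈ D ∧ j < n + 1) := by omega
      have h1' : ¬ (n + 1 ∈ D ∧ j + 1 < n + 1) := by omega
      have hlen : j < n + 1 + ω.length := by
        simp only [List.length_cons] at hj2; omega
      rw [if_neg h1, if_neg h1', ih (n+1) (by omega) hlen]
      have hget : (a :: ω)[j - n]'(by simp only [List.length_cons]; omega)
          = ω[j - (n+1)]'(by omega) := by
        have he : j - n = (j - (n+1)) + 1 := by omega
        simp only [he, List.getElem_cons_succ]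
      by_cases hD : j + 1 ∈ D
      · simp [hD, hget]
      · simp [hD]

lemma F_split (ω : List B) (hl : ω ≠ []) (hinD : ω.length ∈ D) {j : ℕ} (hj : j < ω.length) :
    F 0 ω D j = F 0 ω.dropLast (D.erase ω.length) j ++ [ω.getLast hl] := by
  have hlen : ω.dropLast.length = ω.length - 1 := List.length_dropLast
  have hpos : 0 < ω.length := List.length_pos_iff.mpr hl
  conv_lhs => rw [← List.dropLast_append_getLast hl]
  rw [F_append]
  congr 1
  · exact F_erase j ω.dropLast (by omega)
  · rw [F_cons]
    have hc : 0 + ω.dropLast.length + 1 ∈ D ∧ j < 0 + ω.dropLast.length + 1 := by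
      constructor
      · rw [show 0 + ω.dropLast.length + 1 = ω.length by omega]; exact hinD
      · omega
    rw [if_pos hc]
    rfl

lemma len_prodGT (ω : List B) (hlp : LeftPositive cs ω D) (j : ℕ) :
    cs.length (prodGT cs ω D j) = (F 0 ω D j).length := by
  suffices h : ∀ d j, ω.length ≤ j + d → cs.length (prodGT cs ω D j) = (F 0 ω D j).length from
    h ω.length j (by omega)
  intro d
  induction d with
  | zero =>
    intro j hj
    rw [prodGT_eq, F_empty ω (by omega)]
    simp
  | succ d ih =>
    intro j hj
    rcases le_or_gt ω.length j with hle | hlt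
    · rw [prodGT_eq, F_empty ω (by omega)]; simp
    · have hrec := F_rec (D := D) 0 ω (Nat.zero_le j) (by omega)
      by_cases hD : j + 1 ∈ D
      · rw [if_pos hD] at hrec
        have hprod : prodGT cs ω D j
            = cs.simple (ω.get ⟨j - 0, by omega⟩) * prodGT cs ω D (j+1) := by
          rw [prodGT_eq, prodGT_eq, hrec]
          simp [CoxeterSystem.wordProd_cons]
        by_cases hjl : j + 1 < ω.length
        · have hlpj := hlp ⟨j, hlt⟩ hjl
          simp only [List.get_eq_getElem, Nat.sub_zero] at hlpj hprod ⊢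
          rw [hprod, hrec]
          simp only [List.length_append, List.length_cons, List.length_nil]
          rw [hlpj, ih (j+1) (by omega)]
          omega
        · have hnil : F 0 ω D (j+1) = [] := F_empty ω (by omega)
          rw [hprod, hrec, hnil, prodGT_eq, hnil]
          simp [CoxeterSystem.wordProd_nil, CoxeterSystem.length_simple]
      · rw [if_neg hD] at hrec
        have heq : prodGT cs ω D j = prodGT cs ω D (j+1) := by
          rw [prodGT_eq, prodGT_eq, hrec]; simp
        rw [heq, hrec, List.nil_append]
        exact ih (j+1) (by omega)


/-- Let `ω = (α_1, …, α_l)` be a reduced word for `w` with `l ≥ 1`,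
`y ≤ w`, and let `D = LP_i(y)`. Suppose `l ∈ D`, and set `i' = (α_1, …, α_{l-1})`
(a reduced word for `w ⬝ s_{α_l}`) and `D' = D \ {l}`. Then (a) for every
`j ∈ {0, …, l-1}`, `w(i)^D_{>j} = (w s_{α_l})(i')^{D'}_{>j} ⬝ s_{α_l}` and
`ℓ(w(i)^D_{>j}) = ℓ((w s_{α_l})(i')^{D'}_{>j}) + 1`; in particular
`ℓ(y ⬝ s_{α_l}) = ℓ(y) - 1`; (b) `D'` is left positive for `i'`;
(c) `y ⬝ s_{α_l} ≤ w ⬝ s_{α_l}` in the Bruhat order and `LP_{i'}(y ⬝ s_{α_l}) = D'`. -/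
theorem statement6 (w y : W) (ω : List B) (hl : ω ≠ [])
    (hred : IsReducedWordFor cs ω w) (hy : BruhatLE cs y w)
    (D : Finset ℕ) (hD : D ⊆ Finset.Icc 1 ω.length)
    (hlp : LeftPositive cs ω D) (hprod : subwordProd cs ω D = y)
    (hinD : ω.length ∈ D) :
    IsReducedWordFor cs ω.dropLast (w * cs.simple (ω.getLast hl)) ∧
    (∀ j < ω.length,
      prodGT cs ω D j =
        prodGT cs ω.dropLast (D.erase ω.length) j * cs.simple (ω.getLast hl) ∧
      cs.length (prodGT cs ω D j) =
        cs.length (prodGT cs ω.dropLast (D.erase ω.length) j) + 1) ∧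
    cs.length (y * cs.simple (ω.getLast hl)) + 1 = cs.length y ∧
    LeftPositive cs ω.dropLast (D.erase ω.length) ∧
    (BruhatLE cs (y * cs.simple (ω.getLast hl)) (w * cs.simple (ω.getLast hl)) ∧
      D.erase ω.length ⊆ Finset.Icc 1 (ω.length - 1) ∧
      subwordProd cs ω.dropLast (D.erase ω.length) = y * cs.simple (ω.getLast hl)) := by
  have hpos : 0 < ω.length := List.length_pos_iff.mpr hl
  have hlen' : ω.dropLast.length = ω.length - 1 := List.length_dropLast
  have hsplitω : ω.dropLast ++ [ω.getLast hl] = ω := List.dropLast_append_getLast hl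
  have hπ : cs.wordProd ω = cs.wordProd ω.dropLast * cs.simple (ω.getLast hl) := by
    conv_lhs => rw [← hsplitω]
    rw [CoxeterSystem.wordProd_append, CoxeterSystem.wordProd_cons,
      CoxeterSystem.wordProd_nil, mul_one]
  have hw : cs.wordProd ω = w := hred.1
  have hlw : cs.length w = ω.length := by rw [← hw]; exact hred.2
  have hπ' : cs.wordProd ω.dropLast = w * cs.simple (ω.getLast hl) := by
    rw [← hw, hπ, mul_assoc, cs.simple_mul_simple_self, mul_one]
  have hred' : IsReducedWordFor cs ω.dropLast (w * cs.simple (ω.getLast hl)) := by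
    refine ⟨hπ', ?_⟩
    have h1 : cs.length (cs.wordProd ω.dropLast) ≤ ω.length - 1 := by
      have := cs.length_wordProd_le ω.dropLast
      omega
    have h2 : ω.length - 1 ≤ cs.length (cs.wordProd ω.dropLast) := by
      have := cs.length_mul_ge_length_sub_length w (cs.simple (ω.getLast hl))
      rw [cs.length_simple, hlw] at this
      rw [hπ']
      omega
    unfold CoxeterSystem.IsReduced
    omega
  have hsplit : ∀ j < ω.length, prodGT cs ω D j
      = prodGT cs ω.dropLast (D.erase ω.length) j * cs.simple (ω.getLast hl) := by
    intro j hj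
    rw [prodGT_eq, prodGT_eq, F_split ω hl hinD hj, CoxeterSystem.wordProd_append,
      CoxeterSystem.wordProd_cons, CoxeterSystem.wordProd_nil, mul_one]
  have hflen : ∀ j < ω.length,
      (F 0 ω D j).length = (F 0 ω.dropLast (D.erase ω.length) j).length + 1 := by
    intro j hj
    rw [F_split ω hl hinD hj]
    simp
  have hlenGT : ∀ j < ω.length,
      cs.length (prodGT cs ω D j) = cs.length (prodGT cs ω.dropLast (D.erase ω.length) j) + 1
      ∧ cs.length (prodGT cs ω.dropLast (D.erase ω.length) j)
        = (F 0 ω.dropLast (D.erase ω.length) j).length := by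
    intro j hj
    have e1 : cs.length (prodGT cs ω D j)
        = (F 0 ω.dropLast (D.erase ω.length) j).length + 1 := by
      rw [len_prodGT cs ω hlp j, hflen j hj]
    have e2 : cs.length (prodGT cs ω.dropLast (D.erase ω.length) j)
        ≤ (F 0 ω.dropLast (D.erase ω.length) j).length := by
      rw [prodGT_eq]
      exact cs.length_wordProd_le _
    have e3 : prodGT cs ω.dropLast (D.erase ω.length) j
        = prodGT cs ω D j * cs.simple (ω.getLast hl) := by
      rw [hsplit j hj, mul_assoc, cs.simple_mul_simple_self, mul_one]
    have e4 := cs.length_mul_ge_length_sub_length (prodGT cs ω D j) (cs.simple (ω.getLast hl))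
    rw [cs.length_simple, ← e3] at e4
    omega
  have hys : y * cs.simple (ω.getLast hl) = prodGT cs ω.dropLast (D.erase ω.length) 0 := by
    rw [← hprod]
    show prodGT cs ω D 0 * _ = _
    rw [hsplit 0 hpos, mul_assoc, cs.simple_mul_simple_self, mul_one]
  have hylen : cs.length (y * cs.simple (ω.getLast hl)) + 1 = cs.length y := by
    have h0 := (hlenGT 0 hpos).1
    rw [← hys] at h0
    have hyy : prodGT cs ω D 0 = y := hprod
    rw [hyy] at h0
    omega
  have hlp' : LeftPositive cs ω.dropLast (D.erase ω.length) := by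
    intro j hj
    have hjl : (j : ℕ) + 1 < ω.length := by omega
    have hjw : (j : ℕ) < ω.length := by omega
    have hgets : ω.dropLast.get j = ω.get ⟨(j : ℕ), hjw⟩ := by
      simp only [List.get_eq_getElem]
      exact List.getElem_dropLast j.isLt
    have h1 := hsplit ((j : ℕ) + 1) hjl
    have h2 := (hlenGT ((j : ℕ) + 1) hjl).1
    have h3 := hlp ⟨(j : ℕ), hjw⟩ hjl
    rw [hgets]
    set u' := prodGT cs ω.dropLast (D.erase ω.length) ((j : ℕ) + 1) with hu'
    set u := prodGT cs ω D ((j : ℕ) + 1) with hu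
    set b := ω.get ⟨(j : ℕ), hjw⟩ with hb
    have h4 : cs.length (cs.simple b * u') ≤ cs.length u' + 1 := by
      have := cs.length_mul_le (cs.simple b) u'
      rw [cs.length_simple] at this
      omega
    have h5 := cs.length_mul_le (cs.simple b * u') (cs.simple (ω.getLast hl))
    rw [cs.length_simple, mul_assoc, ← h1, h3, h2] at h5
    omega
  refine ⟨hred', fun j hj => ⟨hsplit j hj, (hlenGT j hj).1⟩, hylen, hlp', ?_, ?_, ?_⟩
  · refine ⟨ω.dropLast, hred', F 0 ω.dropLast (D.erase ω.length) 0, ?_, ?_, ?_⟩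
    · have hsub : (F 0 ω.dropLast (D.erase ω.length) 0).Sublist
          (List.map Prod.snd (List.map Prod.swap (List.zipIdx ω.dropLast 0))) :=
        List.Sublist.map _ List.filter_sublist
      rwa [List.map_map, show Prod.snd ∘ Prod.swap = (Prod.fst : B × ℕ → B) from rfl,
        List.zipIdx_map_fst] at hsub
    · rw [← prodGT_eq, ← hys]
    · show cs.length _ = _
      rw [← prodGT_eq]
      exact (hlenGT 0 hpos).2
  · intro k hk
    rw [Finset.mem_erase] at hk
    have := hD hk.2
    rw [Finset.mem_Icc] at this ⊢
    omega
  · show prodGT cs ω.dropLast (D.erase ω.length) 0 = _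
    exact hys.symm

end QSC
end

section
/- Let (W,S) be a Coxeter system, i = (α_1,…,α_l) a reduced word for w ∈ W with l ≥ 1, and y ∈ W with y ≤ w. Then l ∈ LP_i(y) if and only if y ≰ w·s_{α_l} in the Bruhat order; equivalently, l ∉ LP_i(y) if and only if y ≤ w·s_{α_l}. -/
open CoxeterSystem List

namespace QSC

variable {B W : Type*} [Group W] {M : CoxeterMatrix B} (cs : CoxeterSystem M W)

local prefix:100 "ℓ" => cs.length
local prefix:100 "π" => cs.wordProd

lemma zmod2_cases (a : ZMod 2) : a = 0 ∨ a = 1 := by revert a; decide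
lemma zmod2_add_self (a : ZMod 2) : a + a = 0 := by revert a; decide
lemma zmod2_aux (a : ZMod 2) : a + (1 + a) = 1 := by revert a; decide
lemma zmod2_eq_of_add_eq_zero {a b : ZMod 2} (h : a + b = 0) : a = b := by
  revert h; revert a b; decide

open scoped Classical

/-- The function underlying the reflection-cocycle permutation for a simple reflection. -/
noncomputable def nuFun (i : B) : W × ZMod 2 → W × ZMod 2 :=
  fun q => (cs.simple i * q.1 * cs.simple i, q.2 + if q.1 = cs.simple i then 1 else 0)

lemma conj_eq_iff (g u t : W) : (g * t * g⁻¹ = u) ↔ (t = g⁻¹ * u * g) := by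
  constructor
  · intro h; rw [← h]; group
  · intro h; rw [h]; group

lemma conj_eq_iff'' (g u t : W) (hg : g * g = 1) : (g * t * g = u) ↔ (t = g * u * g) := by
  constructor
  · intro h
    rw [← h]
    simp only [← mul_assoc]
    rw [hg, one_mul, mul_assoc, hg, mul_one]
  · intro h
    rw [h]
    simp only [← mul_assoc]
    rw [hg, one_mul, mul_assoc, hg, mul_one]

lemma nuFun_invol (i : B) (q : W × ZMod 2) : nuFun cs i (nuFun cs i q) = q := by
  obtain ⟨t, ε⟩ := q
  have hiff : (cs.simple i * t * cs.simple i = cs.simple i) ↔ (t = cs.simple i) := by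
    rw [show cs.simple i * t * cs.simple i = cs.simple i * t * (cs.simple i)⁻¹ by
      rw [inv_simple], conj_eq_iff]
    simp
  simp only [nuFun, Prod.mk.injEq]
  constructor
  · simp [mul_assoc]
  · simp only [hiff]
    rcases em (t = cs.simple i) with h | h <;> simp [h, add_assoc, zmod2_add_self]

/-- The reflection-cocycle permutation for a simple reflection. -/
noncomputable def nuPerm (i : B) : Equiv.Perm (W × ZMod 2) :=
  ⟨nuFun cs i, nuFun cs i, nuFun_invol cs i, nuFun_invol cs i⟩

lemma nuPerm_apply (i : B) (t : W) (ε : ZMod 2) :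
    nuPerm cs i (t, ε) = (cs.simple i * t * cs.simple i, ε + if t = cs.simple i then 1 else 0) :=
  rfl

lemma rho_key (i j : B) (k : ℕ) :
    cs.simple j * (cs.simple i * cs.simple j) ^ k
      = ((cs.simple i * cs.simple j) ^ k)⁻¹ * cs.simple j := by
  have hstep : cs.simple j * (cs.simple i * cs.simple j)
      = (cs.simple i * cs.simple j)⁻¹ * cs.simple j := by
    rw [mul_inv_rev, inv_simple, inv_simple, mul_assoc]
  induction k with
  | zero => simp
  | succ k ih =>
    rw [pow_succ, ← mul_assoc, ih, mul_assoc, hstep, ← mul_assoc, ← mul_inv_rev]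
    rw [← pow_succ', ← pow_succ]

lemma refl_inv (i j : B) (k : ℕ) :
    (cs.simple j * (cs.simple i * cs.simple j) ^ k)⁻¹
      = cs.simple j * (cs.simple i * cs.simple j) ^ k := by
  rw [rho_key, mul_inv_rev, inv_inv, inv_simple, ← rho_key]

lemma conj_sj (i j : B) (k : ℕ) :
    ((cs.simple i * cs.simple j) ^ k)⁻¹ * cs.simple j * (cs.simple i * cs.simple j) ^ k
      = cs.simple j * (cs.simple i * cs.simple j) ^ (2 * k) := by
  rw [← rho_key cs i j k, mul_assoc, two_mul, pow_add]

lemma conj_si (i j : B) (k : ℕ) :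
    (cs.simple j * (cs.simple i * cs.simple j) ^ k) * cs.simple i *
        (cs.simple j * (cs.simple i * cs.simple j) ^ k)
      = cs.simple j * (cs.simple i * cs.simple j) ^ (2 * k + 1) := by
  have h : 2 * k + 1 = k + (1 + k) := by ring
  rw [h, pow_add, pow_add, pow_one]
  simp only [mul_assoc]

lemma nuPerm_mul_pow_apply (i j : B) (k : ℕ) (t : W) (ε : ZMod 2) :
    ((nuPerm cs i * nuPerm cs j) ^ k) (t, ε) =
      ((cs.simple i * cs.simple j) ^ k * t * ((cs.simple i * cs.simple j) ^ k)⁻¹,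
        ε + ∑ n ∈ Finset.range (2 * k),
          if t = cs.simple j * (cs.simple i * cs.simple j) ^ n then 1 else 0) := by
  induction k with
  | zero => simp
  | succ k ih =>
    rw [pow_succ', Equiv.Perm.mul_apply, ih]
    simp only [Equiv.Perm.mul_apply, nuPerm_apply]
    have e2 : ((cs.simple i * cs.simple j) ^ k * t * (((cs.simple i * cs.simple j) ^ k))⁻¹
        = cs.simple j) ↔ (t = cs.simple j * (cs.simple i * cs.simple j) ^ (2 * k)) := by
      rw [conj_eq_iff, conj_sj cs i j k]
    have hg : cs.simple j * ((cs.simple i * cs.simple j) ^ k * t *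
          ((cs.simple i * cs.simple j) ^ k)⁻¹) * cs.simple j
        = (cs.simple j * (cs.simple i * cs.simple j) ^ k) * t *
          (((cs.simple i * cs.simple j) ^ k)⁻¹ * cs.simple j) := by
      simp only [mul_assoc]
    have hgsq : (cs.simple j * (cs.simple i * cs.simple j) ^ k) *
        (cs.simple j * (cs.simple i * cs.simple j) ^ k) = 1 := by
      nth_rewrite 2 [← refl_inv cs i j k]
      exact mul_inv_cancel _
    have e1 : (cs.simple j * ((cs.simple i * cs.simple j) ^ k * t *
          ((cs.simple i * cs.simple j) ^ k)⁻¹) * cs.simple j = cs.simple i) ↔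
        (t = cs.simple j * (cs.simple i * cs.simple j) ^ (2 * k + 1)) := by
      rw [hg, ← rho_key cs i j k, conj_eq_iff'' _ _ _ hgsq, conj_si]
    simp only [Prod.mk.injEq]
    constructor
    · show cs.simple i * (cs.simple j * ((cs.simple i * cs.simple j) ^ k * t *
          ((cs.simple i * cs.simple j) ^ k)⁻¹) * cs.simple j) * cs.simple i
        = (cs.simple i * cs.simple j) ^ (k + 1) * t * ((cs.simple i * cs.simple j) ^ (k + 1))⁻¹
      simp only [pow_succ', mul_inv_rev, inv_simple, mul_assoc]
    · show (ε + ∑ n ∈ Finset.range (2 * k),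
          if t = cs.simple j * (cs.simple i * cs.simple j) ^ n then 1 else 0) +
          (if (cs.simple i * cs.simple j) ^ k * t * ((cs.simple i * cs.simple j) ^ k)⁻¹
              = cs.simple j then 1 else 0) +
          (if cs.simple j * ((cs.simple i * cs.simple j) ^ k * t *
              ((cs.simple i * cs.simple j) ^ k)⁻¹) * cs.simple j = cs.simple i then 1 else 0)
        = ε + ∑ n ∈ Finset.range (2 * (k + 1)),
            if t = cs.simple j * (cs.simple i * cs.simple j) ^ n then 1 else 0
      rw [if_congr e2 rfl rfl, if_congr e1 rfl rfl,
        show 2 * (k + 1) = 2 * k + 1 + 1 by ring, Finset.sum_range_succ, Finset.sum_range_succ]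
      ring

lemma nuPerm_liftable : M.IsLiftable (fun i => nuPerm cs i) := by
  intro i j
  apply Equiv.ext
  rintro ⟨t, ε⟩
  rw [nuPerm_mul_pow_apply, cs.simple_mul_simple_pow i j]
  have hsum : ∑ n ∈ Finset.range (2 * M i j),
      (if t = cs.simple j * (cs.simple i * cs.simple j) ^ n then (1 : ZMod 2) else 0) = 0 := by
    rw [two_mul, Finset.sum_range_add]
    have : ∀ n, cs.simple j * (cs.simple i * cs.simple j) ^ (M i j + n)
        = cs.simple j * (cs.simple i * cs.simple j) ^ n := by
      intro n
      rw [pow_add, cs.simple_mul_simple_pow i j, one_mul]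
    simp only [this]
    exact zmod2_add_self _
  rw [hsum]
  simp

/-- The reflection cocycle homomorphism. -/
noncomputable def phi : W →* Equiv.Perm (W × ZMod 2) :=
  cs.lift ⟨fun i => nuPerm cs i, nuPerm_liftable cs⟩

lemma phi_simple (i : B) : phi cs (cs.simple i) = nuPerm cs i :=
  cs.lift_apply_simple (nuPerm_liftable cs) i

/-- Parity of the number of occurrences of `t` in any inversion sequence of a word for `w`. -/
noncomputable def nu (w t : W) : ZMod 2 := (phi cs w (t, 0)).2

/-- Sum over the right inversion sequence. -/
noncomputable def risSum (ω : List B) (t : W) : ZMod 2 :=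
  ((cs.rightInvSeq ω).map (fun u => if t = u then (1 : ZMod 2) else 0)).sum

lemma phi_wordProd (ω : List B) (t : W) (ε : ZMod 2) :
    phi cs (π ω) (t, ε) = (π ω * t * (π ω)⁻¹, ε + risSum cs ω t) := by
  induction ω generalizing t ε with
  | nil => simp [risSum]
  | cons i κ ih =>
    rw [cs.wordProd_cons, map_mul, Equiv.Perm.mul_apply, ih, phi_simple, nuPerm_apply]
    simp only [Prod.mk.injEq]
    constructor
    · show cs.simple i * (π κ * t * (π κ)⁻¹) * cs.simple i = _
      rw [show cs.simple i * (π κ * t * (π κ)⁻¹) * cs.simple i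
        = (cs.simple i * π κ) * t * ((π κ)⁻¹ * (cs.simple i)⁻¹) by rw [inv_simple]; group,
        ← mul_inv_rev]
    · show (ε + risSum cs κ t) + (if π κ * t * (π κ)⁻¹ = cs.simple i then 1 else 0)
        = ε + risSum cs (i :: κ) t
      have : risSum cs (i :: κ) t
          = (if t = (π κ)⁻¹ * cs.simple i * π κ then 1 else 0) + risSum cs κ t := by
        simp [risSum, rightInvSeq]
      rw [this, if_congr (conj_eq_iff (π κ) (cs.simple i) t).symm rfl rfl]
      ring

lemma nu_wordProd (ω : List B) (t : W) : nu cs (π ω) t = risSum cs ω t := by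
  rw [nu, phi_wordProd]
  show 0 + _ = _
  rw [zero_add]

lemma phi_apply (w t : W) (ε : ZMod 2) :
    phi cs w (t, ε) = (w * t * w⁻¹, ε + nu cs w t) := by
  obtain ⟨ω, rfl⟩ := cs.wordProd_surjective w
  rw [phi_wordProd, nu_wordProd]

lemma nu_one (t : W) : nu cs 1 t = 0 := by
  have := nu_wordProd cs [] t
  simpa [risSum] using this

lemma nu_mul (u v t : W) : nu cs (u * v) t = nu cs v t + nu cs u (v * t * v⁻¹) := by
  have h : phi cs (u * v) (t, 0) = phi cs u (phi cs v (t, 0)) := by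
    rw [map_mul]; rfl
  rw [phi_apply, phi_apply, phi_apply] at h
  have := congrArg Prod.snd h
  simpa using this

lemma nu_inv (w t : W) : nu cs w⁻¹ t = nu cs w (w⁻¹ * t * w) := by
  have h := nu_mul cs w w⁻¹ t
  rw [mul_inv_cancel, nu_one] at h
  have h2 := zmod2_eq_of_add_eq_zero h.symm
  rw [h2]
  congr 1
  rw [inv_inv]

lemma nu_simple (i : B) (t : W) : nu cs (cs.simple i) t = if t = cs.simple i then 1 else 0 := by
  have := nu_wordProd cs [i] t
  simpa [risSum, rightInvSeq] using this

lemma nu_reflection_self {t : W} (ht : cs.IsReflection t) : nu cs t t = 1 := by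
  obtain ⟨w, i, rfl⟩ := ht
  have h1 : nu cs (w * cs.simple i * w⁻¹) (w * cs.simple i * w⁻¹)
      = nu cs w⁻¹ (w * cs.simple i * w⁻¹) + nu cs (w * cs.simple i) (cs.simple i) := by
    have := nu_mul cs (w * cs.simple i) w⁻¹ (w * cs.simple i * w⁻¹)
    rw [this]
    congr 2
    group
  have h2 : nu cs w⁻¹ (w * cs.simple i * w⁻¹) = nu cs w (cs.simple i) := by
    rw [nu_inv]
    congr 1
    group
  have h3 : nu cs (w * cs.simple i) (cs.simple i)
      = 1 + nu cs w (cs.simple i) := by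
    rw [nu_mul]
    congr 1
    · rw [nu_simple, if_pos rfl]
    · congr 1
      rw [inv_simple]
      simp [mul_assoc]
  rw [h1, h2, h3]
  exact zmod2_aux _

lemma risSum_ne_zero_mem {ω : List B} {t : W} (h : risSum cs ω t ≠ 0) :
    t ∈ cs.rightInvSeq ω := by
  by_contra hmem
  apply h
  apply List.sum_eq_zero
  intro x hx
  obtain ⟨u, hu, rfl⟩ := List.mem_map.mp hx
  rw [if_neg]
  rintro rfl
  exact hmem hu

lemma nu_eq_one_of_isRightInversion {w t : W} (ht : cs.IsReflection t)
    (h : ℓ (w * t) < ℓ w) : nu cs w t = 1 := by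
  have key : ∀ u : W, ℓ (u * t) > ℓ u → nu cs u t = 0 := by
    intro u hu
    rcases zmod2_cases (nu cs u t) with h0 | h1
    · exact h0
    · exfalso
      obtain ⟨ω, hred, rfl⟩ := cs.exists_reduced_word' u
      rw [nu_wordProd] at h1
      have hmem : t ∈ cs.rightInvSeq ω := risSum_ne_zero_mem cs (by rw [h1]; exact one_ne_zero)
      have := (cs.isRightInversion_of_mem_rightInvSeq hred hmem).2
      omega
  have hw : w = (w * t) * t := by rw [mul_assoc, ht.mul_self, mul_one]
  rw [hw, nu_mul]
  have h2 : t * t * t⁻¹ = t := by rw [ht.mul_self, one_mul, ht.inv]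
  rw [h2, nu_reflection_self cs ht, key (w * t) (by rw [← hw]; exact h)]
  rfl

lemma isRightInversion_of_nu_eq_one {w t : W} (ht : cs.IsReflection t)
    (h : nu cs w t = 1) : ℓ (w * t) < ℓ w := by
  obtain ⟨ω, hred, rfl⟩ := cs.exists_reduced_word' w
  rw [nu_wordProd] at h
  have hmem : t ∈ cs.rightInvSeq ω := risSum_ne_zero_mem cs (by rw [h]; exact one_ne_zero)
  exact (cs.isRightInversion_of_mem_rightInvSeq hred hmem).2

/-- Strong exchange property (right version). -/
lemma strong_exchange_right {t : W} (ht : cs.IsReflection t) (ω : List B)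
    (h : ℓ (π ω * t) < ℓ (π ω)) :
    ∃ j, ∃ hj : j < ω.length, π ω * t = π (ω.eraseIdx j) := by
  have h1 : nu cs (π ω) t = 1 := nu_eq_one_of_isRightInversion cs ht h
  rw [nu_wordProd] at h1
  have hmem : t ∈ cs.rightInvSeq ω := risSum_ne_zero_mem cs (by rw [h1]; exact one_ne_zero)
  obtain ⟨⟨j, hj⟩, hget⟩ := List.mem_iff_get.mp hmem
  rw [cs.length_rightInvSeq] at hj
  refine ⟨j, hj, ?_⟩
  have hgd : (cs.rightInvSeq ω).getD j 1 = t := by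
    rw [List.getD_eq_getElem (hn := by rw [cs.length_rightInvSeq]; exact hj)]
    exact hget
  rw [← hgd]
  exact cs.wordProd_mul_getD_rightInvSeq ω j


lemma descent_exists {κ : List B} (h : ℓ (π κ) < κ.length) :
    ∃ k : Fin κ.length, ℓ (π (κ.take ((k : ℕ) + 1))) < ℓ (π (κ.take (k : ℕ))) := by
  by_contra hc
  push_neg at hc
  have key : ∀ j, j ≤ κ.length → j ≤ ℓ (π (κ.take j)) := by
    intro j
    induction j with
    | zero => intro _; omega
    | succ j ihj =>
      intro hj
      have h1 := ihj (by omega)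
      have hjl : j < κ.length := by omega
      have hne : ℓ (π (κ.take (j + 1))) ≠ ℓ (π (κ.take j)) := by
        rw [← List.take_concat_get hjl, cs.wordProd_concat]
        exact cs.length_mul_simple_ne _ _
      have h2 := hc ⟨j, hjl⟩
      simp only [] at h2
      omega
  have := key κ.length le_rfl
  rw [List.take_length] at this
  omega

lemma exists_reduced_sublist (κ : List B) :
    ∃ κ', κ'.Sublist κ ∧ π κ' = π κ ∧ cs.IsReduced κ' := by
  suffices h : ∀ n (κ : List B), κ.length ≤ n →
      ∃ κ', κ'.Sublist κ ∧ π κ' = π κ ∧ cs.IsReduced κ' from h κ.length κ le_rfl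
  intro n
  induction n with
  | zero =>
    intro κ hκ
    have : κ = [] := List.length_eq_zero_iff.mp (by omega)
    subst this
    refine ⟨[], List.Sublist.refl _, rfl, ?_⟩
    show cs.length (cs.wordProd []) = ([] : List B).length
    simp
  | succ n ih =>
    intro κ hκ
    by_cases hred : cs.IsReduced κ
    · exact ⟨κ, List.Sublist.refl _, rfl, hred⟩
    · have hlt : ℓ (π κ) < κ.length :=
        lt_of_le_of_ne (cs.length_wordProd_le κ) hred
      obtain ⟨⟨k, hk⟩, hdesc⟩ := descent_exists cs hlt
      simp only [] at hdesc
      have htake : π (κ.take (k + 1)) = π (κ.take k) * cs.simple (κ.get ⟨k, hk⟩) := by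
        rw [← List.take_concat_get hk, cs.wordProd_concat]
        rfl
      have hexlen : ℓ (π (κ.take k) * cs.simple (κ.get ⟨k, hk⟩)) < ℓ (π (κ.take k)) := by
        rw [← htake]; exact hdesc
      obtain ⟨j, hj, hexch⟩ := strong_exchange_right cs
        (cs.isReflection_simple (κ.get ⟨k, hk⟩)) (κ.take k) hexlen
      have hjk : j < k := by
        rw [List.length_take] at hj
        omega
      set κ₁ := (κ.take k).eraseIdx j ++ κ.drop (k + 1) with hκ₁
      have hπ₁ : π κ₁ = π κ := by
        rw [hκ₁, cs.wordProd_append, ← hexch, ← htake]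
        rw [← cs.wordProd_append, List.take_append_drop]
      have hsub₁ : κ₁.Sublist κ := by
        have h1 : ((κ.take k).eraseIdx j).Sublist (κ.take k) := List.eraseIdx_sublist _ j
        have h2 : κ₁.Sublist (κ.take k ++ κ.drop (k + 1)) :=
          List.Sublist.append h1 (List.Sublist.refl _)
        rw [← List.eraseIdx_eq_take_drop_succ] at h2
        exact h2.trans (List.eraseIdx_sublist κ k)
      have hlen₁ : κ₁.length ≤ n := by
        have h1 : ((κ.take k).eraseIdx j).length = k - 1 := by
          rw [List.length_eraseIdx]
          simp only [List.length_take]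
          rw [if_pos (show j < k ⊓ κ.length by omega)]
          omega
        have h2 : (κ.drop (k + 1)).length = κ.length - (k + 1) := by
          rw [List.length_drop]
        rw [hκ₁, List.length_append, h1, h2]
        omega
      obtain ⟨κ₂, hsub₂, hπ₂, hred₂⟩ := ih κ₁ hlen₁
      exact ⟨κ₂, hsub₂.trans hsub₁, by rw [hπ₂, hπ₁], hred₂⟩

lemma strong_exchange_left_sublist {t : W} (ht : cs.IsReflection t) (ω : List B)
    (h : ℓ (t * π ω) < ℓ (π ω)) :
    ∃ κ, κ.Sublist ω ∧ π κ = t * π ω ∧ cs.IsReduced κ := by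
  have heq : (π ω.reverse) * t = (t * π ω)⁻¹ := by
    rw [cs.wordProd_reverse, mul_inv_rev, ht.inv]
  have h' : ℓ ((π ω.reverse) * t) < ℓ (π ω.reverse) := by
    rw [heq, cs.length_inv, cs.wordProd_reverse, cs.length_inv]
    exact h
  obtain ⟨j, hj, hexch⟩ := strong_exchange_right cs ht ω.reverse h'
  have hval : π ((ω.reverse.eraseIdx j).reverse) = t * π ω := by
    rw [cs.wordProd_reverse, ← hexch, heq, inv_inv]
  have hsub : ((ω.reverse.eraseIdx j).reverse).Sublist ω := by
    have h1 : (ω.reverse.eraseIdx j).Sublist ω.reverse := List.eraseIdx_sublist _ j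
    have h2 := h1.reverse
    rwa [List.reverse_reverse] at h2
  obtain ⟨κ, h1, h2, h3⟩ := exists_reduced_sublist cs ((ω.reverse.eraseIdx j).reverse)
  exact ⟨κ, h1.trans hsub, by rw [h2, hval], h3⟩

/-- One upward step in the (left) Bruhat chain order. -/
def bstep (u v : W) : Prop :=
  ∃ t, cs.IsReflection t ∧ v = t * u ∧ cs.length u < cs.length v

/-- The chain version of the Bruhat order. -/
def chainLE (u v : W) : Prop := Relation.ReflTransGen (bstep cs) u v

lemma chainLE_subword {u v : W} (h : chainLE cs u v) :
    ∀ ω, cs.IsReduced ω → π ω = v → ∃ κ, κ.Sublist ω ∧ π κ = u ∧ cs.IsReduced κ := by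
  induction h using Relation.ReflTransGen.head_induction_on with
  | refl => exact fun ω hred hπ => ⟨ω, List.Sublist.refl _, hπ, hred⟩
  | head hstep _ ih =>
    intro ω hred hπ
    obtain ⟨t, ht, heq, hlt⟩ := hstep
    obtain ⟨κ, hκsub, hκπ, hκred⟩ := ih ω hred hπ
    have hlen : ℓ (t * π κ) < ℓ (π κ) := by
      rw [hκπ, heq, ← mul_assoc, ht.mul_self, one_mul]
      rw [heq] at hlt
      exact hlt
    obtain ⟨κ', h1, h2, h3⟩ := strong_exchange_left_sublist cs ht κ hlen
    refine ⟨κ', h1.trans hκsub, ?_, h3⟩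
    rw [h2, hκπ, heq, ← mul_assoc, ht.mul_self, one_mul]

/-- Property Z at level `n`. -/
def Zstmt (n : ℕ) : Prop := ∀ (i : B) (u v : W), cs.length v ≤ n →
  cs.length (cs.simple i * u) = cs.length u + 1 →
  cs.length (cs.simple i * v) = cs.length v + 1 →
  chainLE cs u v → chainLE cs (cs.simple i * u) (cs.simple i * v)

/-- Lifting property at level `n`. -/
def Ystmt (n : ℕ) : Prop := ∀ (i : B) (u w : W), cs.length w ≤ n →
  cs.length (cs.simple i * u) = cs.length u + 1 →
  cs.length (cs.simple i * w) < cs.length w →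
  chainLE cs u w → chainLE cs (cs.simple i * u) w

lemma Csub (n : ℕ) (hZ : ∀ m, m < n → Zstmt cs m) :
    ∀ (ω ω' : List B), cs.IsReduced ω → cs.IsReduced ω' → ω'.Sublist ω → ℓ (π ω) ≤ n →
    chainLE cs (π ω') (π ω) := by
  intro ω
  induction ω with
  | nil =>
    intro ω' _ _ hsub _
    rw [List.sublist_nil.mp hsub]
    exact Relation.ReflTransGen.refl
  | cons i κ ih =>
    intro ω' hred hred' hsub hlen
    have hκred : cs.IsReduced κ := by
      have := CoxeterSystem.IsReduced.drop hred 1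
      simpa using this
    have hlc : ℓ (π (i :: κ)) = κ.length + 1 := by
      rw [hred]; simp
    have hl2 : ℓ (π κ) = κ.length := hκred
    rcases List.sublist_cons_iff.mp hsub with hcase | ⟨r, rfl, hr⟩
    · have hchain := ih ω' hκred hred' hcase (by omega)
      exact hchain.tail ⟨cs.simple i, cs.isReflection_simple i, by rw [cs.wordProd_cons], by omega⟩
    · have hrred : cs.IsReduced r := by
        have := CoxeterSystem.IsReduced.drop hred' 1
        simpa using this
      have hchain := ih r hκred hrred hr (by omega)
      have hup1 : ℓ (cs.simple i * π r) = ℓ (π r) + 1 := by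
        have : ℓ (π (i :: r)) = r.length + 1 := by rw [hred']; simp
        rw [cs.wordProd_cons] at this
        rw [this, hrred]
      have hup2 : ℓ (cs.simple i * π κ) = ℓ (π κ) + 1 := by
        rw [← cs.wordProd_cons]
        omega
      have := hZ (ℓ (π κ)) (by omega) i (π r) (π κ) le_rfl hup1 hup2 hchain
      rw [cs.wordProd_cons, cs.wordProd_cons]
      exact this

lemma ZY : ∀ n, Zstmt cs n ∧ Ystmt cs n := by
  intro n
  induction n using Nat.strong_induction_on with
  | _ n ihn =>
  constructor
  · -- Z
    intro i u v hn hu hv hchain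
    revert hn hv
    induction hchain with
    | refl => exact fun _ _ => Relation.ReflTransGen.refl
    | @tail w₁ v hc hstep ih =>
      intro hn hv
      obtain ⟨t, ht, rfl, hlt⟩ := hstep
      rcases cs.length_simple_mul w₁ i with hup | hdn
      · have hchain₁ := ih (by omega) hup
        refine hchain₁.tail ⟨cs.simple i * t * cs.simple i, ?_, ?_, by omega⟩
        · have := ht.conj (cs.simple i)
          rwa [inv_simple] at this
        · rw [← mul_assoc]
          simp [mul_assoc]
      · have hY := (ihn (ℓ w₁) (by omega)).2 i u w₁ le_rfl hu (by omega) hc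
        refine (hY.tail ⟨t, ht, rfl, hlt⟩).tail
          ⟨cs.simple i, cs.isReflection_simple i, rfl, by omega⟩
  · -- Y
    intro i u w hn hu hw hchain
    revert hn hw
    induction hchain with
    | refl => intro _ hw; omega
    | @tail w₁ w hc hstep ih =>
      intro hn hw
      obtain ⟨t, ht, rfl, hlt⟩ := hstep
      rcases cs.length_simple_mul w₁ i with hup | hdn
      · have hZ := (ihn (ℓ w₁) (by omega)).1 i u w₁ le_rfl hu hup hc
        have hatom : chainLE cs (cs.simple i * w₁) (t * w₁) := by
          obtain ⟨τ, hτred, hτeq⟩ := cs.exists_reduced_word' (cs.simple i * (t * w₁))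
          have hdown : ℓ (cs.simple i * (t * w₁)) + 1 = ℓ (t * w₁) := by
            rcases cs.length_simple_mul (t * w₁) i with h1 | h2
            · omega
            · exact h2
          have hπω : π (i :: τ) = t * w₁ := by
            rw [cs.wordProd_cons, ← hτeq, ← mul_assoc, cs.simple_mul_simple_self, one_mul]
          have hτlen : τ.length = ℓ (cs.simple i * (t * w₁)) := by
            rw [hτeq]
            exact hτred.symm
          have hredω : cs.IsReduced (i :: τ) := by
            show ℓ (π (i :: τ)) = (i :: τ).length
            rw [hπω]
            simp only [List.length_cons]
            omega
          have hexlen : ℓ (t * π (i :: τ)) < ℓ (π (i :: τ)) := by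
            rw [hπω, ← mul_assoc, ht.mul_self, one_mul]
            exact hlt
          obtain ⟨κ, hκsub, hκπ, hκred⟩ := strong_exchange_left_sublist cs ht (i :: τ) hexlen
          have hκw₁ : π κ = w₁ := by
            rw [hκπ, hπω, ← mul_assoc, ht.mul_self, one_mul]
          rcases List.sublist_cons_iff.mp hκsub with hcase | ⟨r, rfl, hr⟩
          · have hik : cs.IsReduced (i :: κ) := by
              show ℓ (π (i :: κ)) = (i :: κ).length
              rw [cs.wordProd_cons, hκw₁, hup]
              have : ℓ (π κ) = κ.length := hκred
              rw [hκw₁] at this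
              simp only [List.length_cons]
              omega
            have hchainC := Csub cs n (fun m hm => (ihn m hm).1) (i :: τ) (i :: κ)
              hredω hik (List.Sublist.cons₂ i hcase) (by rw [hπω]; omega)
            rw [hπω, cs.wordProd_cons, hκw₁] at hchainC
            exact hchainC
          · exfalso
            have h1 : π (i :: r) = w₁ := hκw₁
            have h2 : π r = cs.simple i * w₁ := by
              rw [← h1, cs.wordProd_cons, ← mul_assoc, cs.simple_mul_simple_self, one_mul]
            have h3 : ℓ (π (i :: r)) = (i :: r).length := hκred
            have h4 := cs.length_wordProd_le r
            rw [h2, hup] at h4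
            rw [h1] at h3
            simp only [List.length_cons] at h3
            omega
        exact hZ.trans hatom
      · have hchain₁ := ih (by omega) (by omega)
        exact hchain₁.tail ⟨t, ht, rfl, hlt⟩


lemma bruhat_subword_any {y w : W} (h : BruhatLE cs y w) :
    ∀ ω, cs.IsReduced ω → π ω = w →
      ∃ κ, κ.Sublist ω ∧ π κ = y ∧ cs.IsReduced κ := by
  obtain ⟨μ, ⟨hμπ, hμred⟩, μ', hsub, hμ'π, hμ'red⟩ := h
  have hchain : chainLE cs y w := by
    have := Csub cs (ℓ (π μ)) (fun m _ => (ZY cs m).1) μ μ' hμred hμ'red hsub le_rfl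
    rwa [hμπ, hμ'π] at this
  exact fun ω h1 h2 => chainLE_subword cs hchain ω h1 h2

lemma bruhat_of_word {v y : W} (τ κ : List B) (hτred : cs.IsReduced τ) (hτπ : π τ = v)
    (hκ : κ.Sublist τ) (hκπ : π κ = y) (hκred : cs.IsReduced κ) : BruhatLE cs y v :=
  ⟨τ, ⟨hτπ, hτred⟩, κ, hκ, hκπ, hκred⟩

lemma bruhat_lift_lt {i : B} {v y : W} (hv : ℓ (cs.simple i * v) = ℓ v + 1)
    (hy : BruhatLE cs y (cs.simple i * v)) (hlt : ℓ (cs.simple i * y) < ℓ y) :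
    BruhatLE cs (cs.simple i * y) v := by
  obtain ⟨τ, hτred, hτπ⟩ := cs.exists_reduced_word' v
  have hredω : cs.IsReduced (i :: τ) := by
    show ℓ (π (i :: τ)) = (i :: τ).length
    rw [cs.wordProd_cons, ← hτπ, hv]
    have : ℓ v = τ.length := by rw [hτπ]; exact hτred
    simp only [List.length_cons]
    omega
  obtain ⟨κ, hκsub, hκπ, hκred⟩ := bruhat_subword_any cs hy (i :: τ)
    hredω (by rw [cs.wordProd_cons, ← hτπ])
  rcases List.sublist_cons_iff.mp hκsub with hcase | ⟨r, rfl, hr⟩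
  · have hlen : ℓ (cs.simple i * π κ) < ℓ (π κ) := by rw [hκπ]; exact hlt
    obtain ⟨κ₂, h1, h2, h3⟩ := strong_exchange_left_sublist cs
      (cs.isReflection_simple i) κ hlen
    exact bruhat_of_word cs τ κ₂ hτred hτπ.symm (h1.trans hcase) (by rw [h2, hκπ]) h3
  · have hrπ : π r = cs.simple i * y := by
      rw [← hκπ, cs.wordProd_cons, ← mul_assoc, cs.simple_mul_simple_self, one_mul]
    exact bruhat_of_word cs τ r hτred hτπ.symm hr hrπ (by
      have := CoxeterSystem.IsReduced.drop hκred 1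
      simpa using this)

lemma bruhat_lift_ge {i : B} {v y : W} (hv : ℓ (cs.simple i * v) = ℓ v + 1)
    (hy : BruhatLE cs y (cs.simple i * v)) (hge : ¬ ℓ (cs.simple i * y) < ℓ y) :
    BruhatLE cs y v := by
  obtain ⟨τ, hτred, hτπ⟩ := cs.exists_reduced_word' v
  have hredω : cs.IsReduced (i :: τ) := by
    show ℓ (π (i :: τ)) = (i :: τ).length
    rw [cs.wordProd_cons, ← hτπ, hv]
    have : ℓ v = τ.length := by rw [hτπ]; exact hτred
    simp only [List.length_cons]
    omega
  obtain ⟨κ, hκsub, hκπ, hκred⟩ := bruhat_subword_any cs hy (i :: τ)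
    hredω (by rw [cs.wordProd_cons, ← hτπ])
  rcases List.sublist_cons_iff.mp hκsub with hcase | ⟨r, rfl, hr⟩
  · exact bruhat_of_word cs τ κ hτred hτπ.symm hcase hκπ hκred
  · exfalso
    apply hge
    have hrπ : π r = cs.simple i * y := by
      rw [← hκπ, cs.wordProd_cons, ← mul_assoc, cs.simple_mul_simple_self, one_mul]
    have hrred : cs.IsReduced r := by
      have := CoxeterSystem.IsReduced.drop hκred 1
      simpa using this
    have h1 : ℓ (cs.simple i * y) = r.length := by rw [← hrπ]; exact hrred
    have h2 : ℓ y = r.length + 1 := by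
      rw [← hκπ]
      have := hκred
      rw [this]
      simp
    omega

lemma bruhat_le_one {y : W} (h : BruhatLE cs y 1) : y = 1 := by
  obtain ⟨μ, ⟨hμπ, hμred⟩, μ', hsub, hμ'π, _⟩ := h
  have h0 : μ.length = 0 := by
    have h : ℓ (π μ) = μ.length := hμred
    rw [hμπ] at h
    simpa using h.symm
  have : μ = [] := List.length_eq_zero_iff.mp h0
  subst this
  rw [List.sublist_nil.mp hsub] at hμ'π
  rw [← hμ'π]
  simp


/-- The subword of `ω` consisting of the letters at the 1-based positions `m` with `P m`. -/
def sel : List B → (ℕ → Bool) → List B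
  | [], _ => []
  | i :: κ, P => (if P 1 then [i] else []) ++ sel κ (fun m => P (m + 1))

@[simp] lemma sel_nil (P : ℕ → Bool) : sel ([] : List B) P = [] := rfl

lemma sel_cons (i : B) (κ : List B) (P : ℕ → Bool) :
    sel (i :: κ) P = (if P 1 then [i] else []) ++ sel κ (fun m => P (m + 1)) := rfl

lemma sel_congr : ∀ (κ : List B) (P Q : ℕ → Bool),
    (∀ m, 1 ≤ m → m ≤ κ.length → P m = Q m) → sel κ P = sel κ Q := by
  intro κ
  induction κ with
  | nil => intro _ _ _; rfl
  | cons i κ ih =>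
    intro P Q h
    show (if P 1 then [i] else []) ++ sel κ (fun m => P (m + 1))
      = (if Q 1 then [i] else []) ++ sel κ (fun m => Q (m + 1))
    rw [h 1 le_rfl (by simp), ih (fun m => P (m + 1)) (fun m => Q (m + 1))
      (fun m h1 h2 => h (m + 1) (by omega) (by simp; omega))]

lemma sel_sublist : ∀ (κ : List B) (P : ℕ → Bool), (sel κ P).Sublist κ := by
  intro κ
  induction κ with
  | nil => intro _; exact List.Sublist.refl _
  | cons i κ ih =>
    intro P
    show ((if P 1 then [i] else []) ++ sel κ (fun m => P (m + 1))).Sublist (i :: κ)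
    rcases em (P 1 = true) with h | h
    · rw [if_pos h]
      exact List.Sublist.cons₂ i (ih _)
    · rw [if_neg h]
      exact (ih _).cons i

lemma enum_filter_eq_sel (Q : ℕ → Bool) : ∀ (ω : List B) (n : ℕ),
    (((ω.zipIdx n).map Prod.swap).filter fun p => Q (p.1 + 1)).map Prod.snd
      = sel ω (fun m => Q (m + n)) := by
  intro ω
  induction ω with
  | nil => intro n; rfl
  | cons i κ ih =>
    intro n
    rw [List.zipIdx_cons, List.map_cons, List.filter_cons]
    show _ = (if Q (1 + n) then [i] else []) ++ sel κ (fun m => Q (m + 1 + n))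
    have h1 : (fun m => Q (m + 1 + n)) = (fun m => Q (m + (n + 1))) := by
      funext m; congr 1; omega
    have h2 : Q (1 + n) = Q (n + 1) := by congr 1; omega
    rw [h1, ← ih (n + 1), h2]
    rcases em (Q (n + 1) = true) with h | h
    · rw [if_pos h, if_pos (by simpa using h)]
      simp
    · rw [if_neg h, if_neg (by simpa using h)]
      simp

lemma prodGT_eq_s8 (ω : List B) (D : Finset ℕ) (j : ℕ) :
    prodGT cs ω D j = π (sel ω (fun m => decide (m ∈ D ∧ j < m))) := by
  unfold prodGT
  congr 1
  have := enum_filter_eq_sel (fun k => decide (k ∈ D ∧ j < k)) ω 0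
  exact this

/-- The positivity condition phrased with `sel`. -/
def Pos (ω : List B) (P : ℕ → Bool) : Prop :=
  ∀ (j : ℕ) (hj : j + 1 < ω.length),
    cs.length (cs.simple (ω.get ⟨j, by omega⟩)
        * π (sel ω (fun m => P m && decide (j + 1 < m)))) =
      cs.length (π (sel ω (fun m => P m && decide (j + 1 < m)))) + 1

lemma selGT_cons_one (i : B) (κ : List B) (P : ℕ → Bool) :
    sel (i :: κ) (fun m => P m && decide (0 + 1 < m)) = sel κ (fun m => P (m + 1)) := by
  show (if (P 1 && decide (0 + 1 < 1)) then [i] else [])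
      ++ sel κ (fun m => P (m + 1) && decide (0 + 1 < m + 1)) = _
  rw [show (P 1 && decide (0 + 1 < 1)) = false by simp, if_neg (by simp), List.nil_append]
  apply sel_congr
  intro m h1 _
  rw [show decide (0 + 1 < m + 1) = true by simp [Nat.lt_succ_iff]; omega, Bool.and_true]

lemma selGT_cons_shift (i : B) (κ : List B) (P : ℕ → Bool) (j : ℕ) :
    sel (i :: κ) (fun m => P m && decide (j + 1 + 1 < m))
      = sel κ (fun m => P (m + 1) && decide (j + 1 < m)) := by
  show (if (P 1 && decide (j + 1 + 1 < 1)) then [i] else [])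
      ++ sel κ (fun m => P (m + 1) && decide (j + 1 + 1 < m + 1)) = _
  rw [show (P 1 && decide (j + 1 + 1 < 1)) = false by simp, if_neg (by simp), List.nil_append]
  apply sel_congr
  intro m _ _
  congr 1
  exact decide_eq_decide.mpr (by omega)

lemma pos_tail (i : B) (κ : List B) (P : ℕ → Bool) (h : Pos cs (i :: κ) P) :
    Pos cs κ (fun m => P (m + 1)) := by
  intro j hj
  have h2 := h (j + 1) (by simp only [List.length_cons]; omega)
  rw [selGT_cons_shift] at h2
  have hget : (i :: κ).get ⟨j + 1, by simp only [List.length_cons]; omega⟩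
      = κ.get ⟨j, by omega⟩ := by
    simp
  rw [hget] at h2
  exact h2

lemma pos_reduced : ∀ (ω : List B) (P : ℕ → Bool), Pos cs ω P → cs.IsReduced (sel ω P) := by
  intro ω
  induction ω with
  | nil =>
    intro P _
    rw [sel_nil]
    show ℓ (π []) = _
    simp
  | cons i κ ih =>
    intro P hpos
    have hredK := ih _ (pos_tail cs i κ P hpos)
    cases κ with
    | nil =>
      rw [sel_cons, sel_nil, List.append_nil]
      rcases em (P 1 = true) with h | h
      · rw [if_pos h]
        show ℓ (π [i]) = _
        rw [cs.wordProd_singleton]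
        simp [cs.length_simple]
      · rw [if_neg h]
        show ℓ (π []) = _
        simp
    | cons b κ' =>
      have hpos0 := hpos 0 (by simp)
      rw [selGT_cons_one] at hpos0
      have hget0 : (i :: b :: κ').get ⟨0, by simp⟩ = i := rfl
      rw [hget0] at hpos0
      show cs.IsReduced ((if P 1 then [i] else []) ++ sel (b :: κ') (fun m => P (m + 1)))
      rcases em (P 1 = true) with h | h
      · rw [if_pos h, List.singleton_append]
        show ℓ (π (i :: sel (b :: κ') fun m => P (m + 1))) = _
        rw [cs.wordProd_cons, hpos0, hredK]
        simp
      · rw [if_neg h, List.nil_append]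
        exact hredK

lemma sel_sublist_dropLast : ∀ (ω : List B) (P : ℕ → Bool), P ω.length = false →
    (sel ω P).Sublist ω.dropLast := by
  intro ω
  induction ω with
  | nil => intro P _; exact List.Sublist.refl _
  | cons i κ ih =>
    intro P hP
    cases κ with
    | nil =>
      show ((if P 1 then [i] else []) ++ []).Sublist []
      rw [show P 1 = false from hP, if_neg (by simp)]
      exact List.Sublist.refl _
    | cons b κ' =>
      have htail := ih (fun m => P (m + 1)) (by exact hP)
      have hdl : (i :: b :: κ').dropLast = i :: (b :: κ').dropLast := rfl
      rw [hdl]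
      show ((if P 1 then [i] else []) ++ sel (b :: κ') (fun m => P (m + 1))).Sublist _
      rcases em (P 1 = true) with h | h
      · rw [if_pos h, List.singleton_append]
        exact List.Sublist.cons₂ i htail
      · rw [if_neg h, List.nil_append]
        exact htail.cons i

lemma not_bruhat_of_last_mem : ∀ (ω : List B) (hne : ω ≠ []) (P : ℕ → Bool),
    cs.IsReduced ω → Pos cs ω P → P ω.length = true →
    ¬ BruhatLE cs (π (sel ω P)) (π ω * cs.simple (ω.getLast hne)) := by
  intro ω
  induction ω with
  | nil => intro hne; exact absurd rfl hne
  | cons i κ ih =>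
    intro hne P hred hpos hP
    cases κ with
    | nil =>
      intro hB
      have hsel : sel [i] P = [i] := by
        show (if P 1 then [i] else []) ++ [] = [i]
        rw [show P 1 = true from hP, if_pos rfl]
        rfl
      rw [hsel, cs.wordProd_singleton, show ([i].getLast hne) = i from rfl,
        cs.simple_mul_simple_self] at hB
      have h1 := bruhat_le_one cs hB
      have h2 := congrArg cs.length h1
      rw [cs.length_simple] at h2
      simp at h2
    | cons b κ' =>
      have hκne : (b :: κ') ≠ [] := by simp
      have hκred : cs.IsReduced (b :: κ') := by
        have := CoxeterSystem.IsReduced.drop hred 1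
        simpa using this
      have hposT : Pos cs (b :: κ') (fun m => P (m + 1)) := pos_tail cs i (b :: κ') P hpos
      have IH := ih hκne (fun m => P (m + 1)) hκred hposT (by exact hP)
      have hlast : (i :: b :: κ').getLast hne = (b :: κ').getLast hκne := by
        rw [List.getLast_cons hκne]
      have hl1 : ℓ (π (i :: b :: κ')) = (b :: κ').length + 1 := by
        rw [hred]; rfl
      have hl2 : ℓ (π (b :: κ')) = (b :: κ').length := hκred
      have hvd : π (b :: κ') * cs.simple ((b :: κ').getLast hκne) = π ((b :: κ').dropLast) := by
        have heq : π ((b :: κ').dropLast ++ [(b :: κ').getLast hκne]) = π (b :: κ') := by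
          rw [List.dropLast_append_getLast]
        rw [cs.wordProd_append, cs.wordProd_singleton] at heq
        rw [← heq, mul_assoc, cs.simple_mul_simple_self, mul_one]
      have hsd : cs.simple i * (π (b :: κ') * cs.simple ((b :: κ').getLast hκne))
          = π ((i :: b :: κ').dropLast) := by
        rw [hvd, ← cs.wordProd_cons]
        rfl
      have hred_d1 : cs.IsReduced ((b :: κ').dropLast) := by
        rw [List.dropLast_eq_take]; exact CoxeterSystem.IsReduced.take hκred _
      have hred_d2 : cs.IsReduced ((i :: b :: κ').dropLast) := by
        rw [List.dropLast_eq_take]; exact CoxeterSystem.IsReduced.take hred _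
      have hlv : ℓ (π (b :: κ') * cs.simple ((b :: κ').getLast hκne))
          = (b :: κ').length - 1 := by
        rw [hvd]
        have h1 : ℓ (π ((b :: κ').dropLast)) = ((b :: κ').dropLast).length := hred_d1
        rw [h1, List.length_dropLast]
      have hlsv : ℓ (cs.simple i * (π (b :: κ') * cs.simple ((b :: κ').getLast hκne)))
          = (b :: κ').length := by
        rw [hsd]
        have h1 : ℓ (π ((i :: b :: κ').dropLast)) = ((i :: b :: κ').dropLast).length := hred_d2
        rw [h1, List.length_dropLast]
        rfl
      have hv : ℓ (cs.simple i * (π (b :: κ') * cs.simple ((b :: κ').getLast hκne)))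
          = ℓ (π (b :: κ') * cs.simple ((b :: κ').getLast hκne)) + 1 := by
        rw [hlv, hlsv]
        simp only [List.length_cons]
        omega
      have hpos0 := hpos 0 (by simp)
      rw [selGT_cons_one] at hpos0
      have hget0 : (i :: b :: κ').get ⟨0, by simp⟩ = i := rfl
      rw [hget0] at hpos0
      intro hB
      rw [hlast, cs.wordProd_cons, mul_assoc] at hB
      rcases em (P 1 = true) with hP1 | hP1
      · have hsel : sel (i :: b :: κ') P = i :: sel (b :: κ') (fun m => P (m + 1)) := by
          show (if P 1 then [i] else []) ++ _ = _
          rw [if_pos hP1, List.singleton_append]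
        rw [hsel, cs.wordProd_cons] at hB
        have hlt : ℓ (cs.simple i * (cs.simple i * π (sel (b :: κ') fun m => P (m + 1))))
            < ℓ (cs.simple i * π (sel (b :: κ') fun m => P (m + 1))) := by
          rw [cs.simple_mul_simple_cancel_left, hpos0]
          omega
        have := bruhat_lift_lt cs hv hB hlt
        rw [cs.simple_mul_simple_cancel_left] at this
        exact IH this
      · have hsel : sel (i :: b :: κ') P = sel (b :: κ') (fun m => P (m + 1)) := by
          show (if P 1 then [i] else []) ++ _ = _
          rw [if_neg hP1, List.nil_append]
        rw [hsel] at hB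
        have hge : ¬ ℓ (cs.simple i * π (sel (b :: κ') fun m => P (m + 1)))
            < ℓ (π (sel (b :: κ') fun m => P (m + 1))) := by
          rw [hpos0]; omega
        exact IH (bruhat_lift_ge cs hv hB hge)

/-- Let `ω = (α_1, …, α_l)` be a reduced word for `w` with `l ≥ 1`,
`y ≤ w`, and let `D = LP_i(y)` (i.e. `D` is the unique left positive subset for `ω` with
`w(i)^D = y`). Then `l ∈ LP_i(y)` iff `y ≰ w ⬝ s_{α_l}` in the Bruhat order;
equivalently, `l ∉ LP_i(y)` iff `y ≤ w ⬝ s_{α_l}`. -/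
theorem statement8 (w y : W) (ω : List B) (hl : ω ≠ [])
    (hred : IsReducedWordFor cs ω w) (hy : BruhatLE cs y w)
    (D : Finset ℕ) (hD : D ⊆ Finset.Icc 1 ω.length)
    (hlp : LeftPositive cs ω D) (hprod : subwordProd cs ω D = y) :
    (ω.length ∈ D ↔ ¬ BruhatLE cs y (w * cs.simple (ω.getLast hl))) ∧
    (ω.length ∉ D ↔ BruhatLE cs y (w * cs.simple (ω.getLast hl))) := by
  classical
  set P : ℕ → Bool := fun m => decide (m ∈ D) with hPdef
  have hsel : sel ω (fun m => decide (m ∈ D ∧ 0 < m)) = sel ω P := by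
    apply sel_congr
    intro m h1 _
    rw [hPdef]
    exact decide_eq_decide.mpr ⟨fun h => h.1, fun h => ⟨h, by omega⟩⟩
  have hy' : π (sel ω P) = y := by
    rw [← hprod, show subwordProd cs ω D = prodGT cs ω D 0 from rfl, prodGT_eq_s8 cs ω D 0, hsel]
  have hPos : Pos cs ω P := by
    intro j hj
    have h := hlp ⟨j, by omega⟩ hj
    rw [prodGT_eq_s8] at h
    have hsel2 : sel ω (fun m => P m && decide (j + 1 < m))
        = sel ω (fun m => decide (m ∈ D ∧ j + 1 < m)) := by
      apply sel_congr
      intro m _ _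
      rw [hPdef]
      exact (Bool.decide_and _ _).symm
    rw [hsel2]
    exact h
  have hforward : ω.length ∈ D → ¬BruhatLE cs y (w * cs.simple (ω.getLast hl)) := by
    intro hmem
    have h := not_bruhat_of_last_mem cs ω hl P hred.2 hPos (by simp [hPdef, hmem])
    rw [hy', hred.1] at h
    exact h
  have hbackward : ω.length ∉ D → BruhatLE cs y (w * cs.simple (ω.getLast hl)) := by
    intro hmem
    have hPfalse : P ω.length = false := by simp [hPdef, hmem]
    have hd1 : π (ω.dropLast) * cs.simple (ω.getLast hl) = w := by
      have heq : π (ω.dropLast ++ [ω.getLast hl]) = π ω := by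
        rw [List.dropLast_append_getLast]
      rw [cs.wordProd_append, cs.wordProd_singleton] at heq
      rw [heq, hred.1]
    have hd2 : π (ω.dropLast) = w * cs.simple (ω.getLast hl) := by
      rw [← hd1, mul_assoc, cs.simple_mul_simple_self, mul_one]
    exact bruhat_of_word cs ω.dropLast (sel ω P)
      (by rw [List.dropLast_eq_take]; exact CoxeterSystem.IsReduced.take hred.2 _)
      hd2 (sel_sublist_dropLast ω P hPfalse) hy' (pos_reduced cs ω P hPos)
  refine ⟨⟨hforward, ?_⟩, hbackward, ?_⟩
  · intro hn
    by_contra hmem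
    exact hn (hbackward hmem)
  · intro hB hmem
    exact hforward hmem hB

end QSC
end
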